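/- arXiv:1904.12010 — 6 statements merged into one kernel-verified Lean document; each statement's English description precedes it below -/
import Mathlib

section
/- Let P, Q be continuous functions on [0,∞) with Q > 0. If u and v are solutions of u'' = P u' + Q u with u(0) ≥ v(0) and u'(0) ≥ v'(0), and u is not identical to v, then u(t) > v(t) and u'(t) > v'(t) for all t > 0. -/
/-!
The difference `w = u - v` solves the same equation with `w 0, w' 0 ≥ 0`, and Gronwall's
inequality for the pair `(w, w')` shows that these initial values are not both zero. With
`A' = P` the equation reads `(w' e^{-A})' = Q w e^{-A}`, so `w ≥ 0` on an interval forces `w'`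
to keep the sign of `w' 0` there, and `w' ≥ 0` makes `w` increase. Hence whichever of `w, w'`
starts positive cannot have a first zero, and then the other one is positive for `t > 0` too.
-/

open Set Real

theorem ContinuousOn.forall_pos_of_forall_Ico_pos {f : ℝ → ℝ} {a : ℝ}
    (hf : ContinuousOn f (Ici a)) (ha : 0 < f a)
    (hstep : ∀ t > a, (∀ s ∈ Ico a t, 0 < f s) → 0 < f t) : ∀ t ≥ a, 0 < f t := by
  by_contra! ⟨t, hta, hft⟩
  set S := Ici a ∩ f ⁻¹' Iic 0
  have hbdd : BddBelow S := ⟨a, fun _ hs => hs.1⟩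
  have hmem : sInf S ∈ S :=
    (hf.preimage_isClosed_of_isClosed isClosed_Ici isClosed_Iic).csInf_mem ⟨t, hta, hft⟩ hbdd
  have hlt : a < sInf S := hmem.1.lt_of_ne fun h => (h ▸ hmem.2 : f a ≤ 0).not_gt ha
  refine (hstep _ hlt fun s hs => ?_).not_ge hmem.2
  by_contra! hfs
  exact (csInf_le hbdd ⟨hs.1, hfs⟩).not_gt hs.2

theorem ContinuousOn.exists_hasDerivAt_Ici {f : ℝ → ℝ} {a : ℝ}
    (hf : ContinuousOn f (Ici a)) :
    ∃ F : ℝ → ℝ, ∀ t ∈ Ici a, HasDerivAt F (f t) t := by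
  have hc : Continuous fun s => f (max s a) :=
    hf.comp_continuous (continuous_id.max continuous_const) fun s => le_max_right s a
  refine ⟨fun t => ∫ s in a..t, f (max s a), fun t ht => ?_⟩
  simpa only [max_eq_left (mem_Ici.1 ht)] using (hc.integral_hasStrictDerivAt a t).hasDerivAt

section RightDerivative

variable {f f' : ℝ → ℝ} {a b : ℝ}

theorem monotoneOn_Icc_of_hasDerivWithinAt_Ici
    (hf : ∀ t ∈ Ici a, HasDerivWithinAt f (f' t) (Ici a) t)
    (hf' : ∀ t ∈ Ioo a b, 0 ≤ f' t) : MonotoneOn f (Icc a b) :=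
  monotoneOn_of_hasDerivWithinAt_nonneg (convex_Icc a b)
    (fun t ht => (hf t ht.1).continuousWithinAt.mono Icc_subset_Ici_self)
    (by rw [interior_Icc]
        exact fun t ht => ((hf t ht.1.le).hasDerivAt (Ici_mem_nhds ht.1)).hasDerivWithinAt)
    (by rwa [interior_Icc])

theorem strictMonoOn_Icc_of_hasDerivWithinAt_Ici
    (hf : ∀ t ∈ Ici a, HasDerivWithinAt f (f' t) (Ici a) t)
    (hf' : ∀ t ∈ Ioo a b, 0 < f' t) : StrictMonoOn f (Icc a b) :=
  strictMonoOn_of_hasDerivWithinAt_pos (convex_Icc a b)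
    (fun t ht => (hf t ht.1).continuousWithinAt.mono Icc_subset_Ici_self)
    (by rw [interior_Icc]
        exact fun t ht => ((hf t ht.1.le).hasDerivAt (Ici_mem_nhds ht.1)).hasDerivWithinAt)
    (by rwa [interior_Icc])

end RightDerivative

structure SolvesLinearODE (P Q w w' : ℝ → ℝ) : Prop where
  hasDeriv : ∀ t ∈ Ici (0:ℝ), HasDerivWithinAt w (w' t) (Ici 0) t
  hasDeriv' : ∀ t ∈ Ici (0:ℝ), HasDerivWithinAt w' (P t * w' t + Q t * w t) (Ici 0) t

namespace SolvesLinearODE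

variable {P Q u u' v v' w w' A : ℝ → ℝ}

theorem sub (hu : SolvesLinearODE P Q u u') (hv : SolvesLinearODE P Q v v') :
    SolvesLinearODE P Q (u - v) (u' - v') where
  hasDeriv t ht := (hu.hasDeriv t ht).sub (hv.hasDeriv t ht)
  hasDeriv' t ht :=
    ((hu.hasDeriv' t ht).sub (hv.hasDeriv' t ht)).congr_deriv (by simp only [Pi.sub_apply]; ring)

theorem eq_zero_of_initial_eq_zero (h : SolvesLinearODE P Q w w') (hP : ContinuousOn P (Ici 0))
    (hQ : ContinuousOn Q (Ici 0)) (h0 : w 0 = 0) (h0' : w' 0 = 0) :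
    ∀ t ∈ Ici (0:ℝ), w t = 0 := by
  intro T hT
  obtain ⟨M, hM⟩ := isCompact_Icc.exists_bound_of_continuousOn
    ((hP.abs.add hQ.abs).mono (Icc_subset_Ici_self : Icc 0 T ⊆ Ici 0))
  set f : ℝ → ℝ × ℝ := fun t => (w t, w' t)
  have hf (t : ℝ) (ht : t ∈ Ici 0) :
      HasDerivWithinAt f (w' t, P t * w' t + Q t * w t) (Ici 0) t :=
    (h.hasDeriv t ht).prodMk (h.hasDeriv' t ht)
  have hbound (t : ℝ) (ht : t ∈ Ico 0 T) :
      ‖(w' t, P t * w' t + Q t * w t)‖ ≤ max 1 M * ‖f t‖ + 0 := by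
    have hPQ : |P t| + |Q t| ≤ M := (le_abs_self _).trans (hM t (Ico_subset_Icc_self ht))
    have hw : |w t| ≤ ‖f t‖ := le_max_left _ _
    have hw' : |w' t| ≤ ‖f t‖ := le_max_right _ _
    rw [Prod.norm_mk, add_zero, Real.norm_eq_abs, Real.norm_eq_abs]
    refine max_le (hw'.trans (le_mul_of_one_le_left (norm_nonneg _) (le_max_left 1 M))) ?_
    calc |P t * w' t + Q t * w t| ≤ |P t| * |w' t| + |Q t| * |w t| := by
          simpa only [abs_mul] using abs_add_le (P t * w' t) (Q t * w t)
      _ ≤ (|P t| + |Q t|) * ‖f t‖ := by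
          rw [add_mul]; gcongr
      _ ≤ max 1 M * ‖f t‖ := by gcongr; exact hPQ.trans (le_max_right 1 M)
  have hT' := norm_le_gronwallBound_of_norm_deriv_right_le (δ := 0)
    (fun t ht => (hf t ht.1).continuousWithinAt.mono Icc_subset_Ici_self)
    (fun t ht => (hf t ht.1).mono (Ici_subset_Ici.2 ht.1)) (by simp [f, h0, h0']) hbound
    T ⟨hT, le_rfl⟩
  rw [gronwallBound_ε0_δ0] at hT'
  exact abs_nonpos_iff.1 ((le_max_left _ _).trans hT')

theorem hasDerivWithinAt_mul_exp (h : SolvesLinearODE P Q w w')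
    (hA : ∀ t ∈ Ici (0:ℝ), HasDerivAt A (P t) t) (t : ℝ) (ht : t ∈ Ici 0) :
    HasDerivWithinAt (fun s => w' s * exp (-A s)) (Q t * w t * exp (-A t)) (Ici 0) t :=
  ((h.hasDeriv' t ht).mul (hA t ht).fun_neg.exp.hasDerivWithinAt).congr_deriv (by ring)

theorem monotoneOn_mul_exp (h : SolvesLinearODE P Q w w') (hQ : ∀ t ∈ Ici (0:ℝ), 0 < Q t)
    (hA : ∀ t ∈ Ici (0:ℝ), HasDerivAt A (P t) t) {b : ℝ} (hw : ∀ t ∈ Ioo 0 b, 0 ≤ w t) :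
    MonotoneOn (fun s => w' s * exp (-A s)) (Icc 0 b) :=
  monotoneOn_Icc_of_hasDerivWithinAt_Ici (h.hasDerivWithinAt_mul_exp hA) fun t ht =>
    mul_nonneg (mul_nonneg (hQ t ht.1.le).le (hw t ht)) (exp_pos _).le

theorem strictMonoOn_mul_exp (h : SolvesLinearODE P Q w w') (hQ : ∀ t ∈ Ici (0:ℝ), 0 < Q t)
    (hA : ∀ t ∈ Ici (0:ℝ), HasDerivAt A (P t) t) {b : ℝ} (hw : ∀ t ∈ Ioo 0 b, 0 < w t) :
    StrictMonoOn (fun s => w' s * exp (-A s)) (Icc 0 b) :=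
  strictMonoOn_Icc_of_hasDerivWithinAt_Ici (h.hasDerivWithinAt_mul_exp hA) fun t ht =>
    mul_pos (mul_pos (hQ t ht.1.le) (hw t ht)) (exp_pos _)

theorem pos_of_nonneg_of_deriv_pos (h : SolvesLinearODE P Q w w')
    (hQ : ∀ t ∈ Ici (0:ℝ), 0 < Q t) (hA : ∀ t ∈ Ici (0:ℝ), HasDerivAt A (P t) t)
    (h0 : 0 ≤ w 0) (h0' : 0 < w' 0) : ∀ t > 0, 0 < w t ∧ 0 < w' t := by
  have hw' : ∀ t ≥ 0, 0 < w' t := by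
    refine ContinuousOn.forall_pos_of_forall_Ico_pos
      (fun t ht => (h.hasDeriv' t ht).continuousWithinAt) h0' fun t ht hpos => ?_
    have hw : MonotoneOn w (Icc 0 t) := monotoneOn_Icc_of_hasDerivWithinAt_Ici h.hasDeriv
      fun s hs => (hpos s (Ioo_subset_Ico_self hs)).le
    have hg := h.monotoneOn_mul_exp hQ hA fun s hs =>
      h0.trans (hw (left_mem_Icc.2 ht.le) (Ioo_subset_Icc_self hs) hs.1.le)
    exact (mul_pos_iff_of_pos_right (exp_pos _)).1 <| (mul_pos h0' (exp_pos _)).trans_le <|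
      hg (left_mem_Icc.2 ht.le) (right_mem_Icc.2 ht.le) ht.le
  intro t ht
  have hw := strictMonoOn_Icc_of_hasDerivWithinAt_Ici (b := t) h.hasDeriv
    fun s hs => hw' s hs.1.le
  exact ⟨h0.trans_lt (hw (left_mem_Icc.2 ht.le) (right_mem_Icc.2 ht.le) ht), hw' t ht.le⟩

theorem pos_of_pos_of_deriv_nonneg (h : SolvesLinearODE P Q w w')
    (hQ : ∀ t ∈ Ici (0:ℝ), 0 < Q t) (hA : ∀ t ∈ Ici (0:ℝ), HasDerivAt A (P t) t)
    (h0 : 0 < w 0) (h0' : 0 ≤ w' 0) : ∀ t > 0, 0 < w t ∧ 0 < w' t := by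
  have hw : ∀ t ≥ 0, 0 < w t := by
    refine ContinuousOn.forall_pos_of_forall_Ico_pos
      (fun t ht => (h.hasDeriv t ht).continuousWithinAt) h0 fun t ht hpos => ?_
    have hg := h.monotoneOn_mul_exp hQ hA fun s hs => (hpos s (Ioo_subset_Ico_self hs)).le
    have hw' (s : ℝ) (hs : s ∈ Ioo 0 t) : 0 ≤ w' s :=
      (mul_nonneg_iff_of_pos_right (exp_pos _)).1 <| (mul_nonneg h0' (exp_pos _).le).trans <|
        hg (left_mem_Icc.2 ht.le) (Ioo_subset_Icc_self hs) hs.1.le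
    exact h0.trans_le <| monotoneOn_Icc_of_hasDerivWithinAt_Ici h.hasDeriv hw'
      (left_mem_Icc.2 ht.le) (right_mem_Icc.2 ht.le) ht.le
  intro t ht
  have hg := h.strictMonoOn_mul_exp hQ hA (b := t) fun s hs => hw s hs.1.le
  exact ⟨hw t ht.le, (mul_pos_iff_of_pos_right (exp_pos _)).1 <|
    (mul_nonneg h0' (exp_pos _).le).trans_lt <|
      hg (left_mem_Icc.2 ht.le) (right_mem_Icc.2 ht.le) ht⟩

theorem pos_of_initial_nonneg (h : SolvesLinearODE P Q w w') (hP : ContinuousOn P (Ici 0))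
    (hQ : ∀ t ∈ Ici (0:ℝ), 0 < Q t) (h0 : 0 ≤ w 0) (h0' : 0 ≤ w' 0)
    (hnz : 0 < w 0 ∨ 0 < w' 0) : ∀ t > 0, 0 < w t ∧ 0 < w' t := by
  obtain ⟨A, hA⟩ := hP.exists_hasDerivAt_Ici
  rcases hnz with hw0 | hw'0
  · exact h.pos_of_pos_of_deriv_nonneg hQ hA hw0 h0'
  · exact h.pos_of_nonneg_of_deriv_pos hQ hA h0 hw'0

end SolvesLinearODE

/-- Comparison for solutions of `u'' = P u' + Q u` on `[0,∞)` with `Q > 0`. -/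
theorem ode_comparison (P Q u u' v v' : ℝ → ℝ)
    (hP : ContinuousOn P (Ici 0)) (hQ : ContinuousOn Q (Ici 0))
    (hQpos : ∀ t ∈ Ici (0:ℝ), 0 < Q t)
    (hu : ∀ t ∈ Ici (0:ℝ), HasDerivWithinAt u (u' t) (Ici 0) t)
    (hu' : ∀ t ∈ Ici (0:ℝ), HasDerivWithinAt u' (P t * u' t + Q t * u t) (Ici 0) t)
    (hv : ∀ t ∈ Ici (0:ℝ), HasDerivWithinAt v (v' t) (Ici 0) t)
    (hv' : ∀ t ∈ Ici (0:ℝ), HasDerivWithinAt v' (P t * v' t + Q t * v t) (Ici 0) t)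
    (h0 : v 0 ≤ u 0) (h0' : v' 0 ≤ u' 0)
    (hne : ¬ ∀ t ∈ Ici (0:ℝ), u t = v t) :
    ∀ t > (0:ℝ), v t < u t ∧ v' t < u' t := by
  have hw : SolvesLinearODE P Q (u - v) (u' - v') := SolvesLinearODE.sub ⟨hu, hu'⟩ ⟨hv, hv'⟩
  have hw0 : 0 ≤ u 0 - v 0 := sub_nonneg.2 h0
  have hw0' : 0 ≤ u' 0 - v' 0 := sub_nonneg.2 h0'
  have hnz : 0 < u 0 - v 0 ∨ 0 < u' 0 - v' 0 := by
    by_contra! h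
    exact hne fun t ht => sub_eq_zero.1 <|
      hw.eq_zero_of_initial_eq_zero hP hQ (h.1.antisymm hw0) (h.2.antisymm hw0') t ht
  intro t ht
  obtain ⟨hwt, hw't⟩ := hw.pos_of_initial_nonneg hP hQpos hw0 hw0' hnz t ht
  exact ⟨sub_pos.1 hwt, sub_pos.1 hw't⟩
end

section
/- Let P, Q be continuous functions on [0,∞) with Q > 0. Then there exists a solution u of u'' = P u' + Q u on [0,∞) with u(t) > 0 and u'(t) < 0 for all t ≥ 0. -/
/-!
The system `(u, v)' = (v, P v + Q u)` is linear, so Picard–Lindelöf on short intervals, glued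
together, gives global solutions on `[0, ∞)`. With the integrating factor `μ = exp (-∫ P)` the
weighted slope `μ v` has derivative `μ Q u`: it increases while `u > 0`, so a solution that is
positive with nonnegative slope at some time stays positive afterwards.

Let `φ`, `ψ` solve the equation with initial data `(1, 0)` and `(0, 1)`. Both are positive on
`(0, ∞)`, and `c = sup_{t > 0} (-φ t / ψ t)` is the least `c` with `u = φ + c ψ ≥ 0`. Abel's
identity `μ (u ψ' - v ψ) = 1` forbids a double zero of `u`, so `u > 0`. If `v ≥ 0` at some time,
then `μ v` is eventually bounded below by a positive constant, which keeps `ψ / u` bounded; but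
the minimality of `c` makes `ψ / u` unbounded. Hence `v < 0` everywhere.
-/

open Set Real Filter Topology
open scoped NNReal

lemma IsCompact.exists_nnnorm_le_of_continuousOn {α F : Type*} [TopologicalSpace α]
    [SeminormedAddGroup F] {s : Set α} (hs : IsCompact s) {f : α → F} (hf : ContinuousOn f s) :
    ∃ K : ℝ≥0, ∀ x ∈ s, ‖f x‖₊ ≤ K := by
  obtain ⟨C, hC⟩ := hs.exists_bound_of_continuousOn hf
  exact ⟨C.toNNReal, fun x hx => NNReal.coe_le_coe.1 ((hC x hx).trans (Real.le_coe_toNNReal C))⟩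

section

variable {E : Type*} [NormedAddCommGroup E] [NormedSpace ℝ E]

/-- Outside the closed set `s` a derivative within `s` is vacuous. -/
lemma hasDerivWithinAt_of_eqOn_isClosed {F : ℝ → E → E} {h k : ℝ → E} {s : Set ℝ}
    (hs : IsClosed s) (hk : ∀ t ∈ s, HasDerivWithinAt k (F t (k t)) s t) (hhk : EqOn h k s)
    (t : ℝ) : HasDerivWithinAt h (F t (h t)) s t := by
  by_cases ht : t ∈ s
  · rw [hhk ht]
    exact (hk t ht).congr hhk (hhk ht)
  · exact HasFDerivWithinAt.of_notMem_closure (by rwa [hs.closure_eq])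

theorem exists_hasDerivWithinAt_Icc_glue {F : ℝ → E → E} {f g : ℝ → E} {a m b : ℝ}
    (ham : a ≤ m) (hmb : m ≤ b)
    (hf : ∀ t ∈ Icc a m, HasDerivWithinAt f (F t (f t)) (Icc a m) t)
    (hg : ∀ t ∈ Icc m b, HasDerivWithinAt g (F t (g t)) (Icc m b) t) (hfg : f m = g m) :
    ∃ h : ℝ → E, h a = f a ∧ ∀ t ∈ Icc a b, HasDerivWithinAt h (F t (h t)) (Icc a b) t := by
  set h : ℝ → E := fun t => if t ≤ m then f t else g t
  have hhf : EqOn h f (Icc a m) := fun t ht => if_pos ht.2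
  have hhg : EqOn h g (Icc m b) := fun t ht => by
    rcases ht.1.eq_or_lt with rfl | hlt
    · simp [h, hfg]
    · simp [h, hlt.not_ge]
  refine ⟨h, hhf ⟨le_rfl, ham⟩, fun t _ => ?_⟩
  rw [← Icc_union_Icc_eq_Icc ham hmb]
  exact (hasDerivWithinAt_of_eqOn_isClosed isClosed_Icc hf hhf t).union
    (hasDerivWithinAt_of_eqOn_isClosed isClosed_Icc hg hhg t)

namespace LinearODE

variable {A : ℝ → E →L[ℝ] E} {a b : ℝ}

theorem eqOn_Icc_of_hasDerivWithinAt (hA : ContinuousOn A (Icc a b)) {f g : ℝ → E}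
    (hf : ∀ t ∈ Icc a b, HasDerivWithinAt f (A t (f t)) (Icc a b) t)
    (hg : ∀ t ∈ Icc a b, HasDerivWithinAt g (A t (g t)) (Icc a b) t) (h : f a = g a) :
    EqOn f g (Icc a b) := by
  obtain ⟨K, hK⟩ := isCompact_Icc.exists_nnnorm_le_of_continuousOn hA
  have forward : ∀ {k : ℝ → E}, (∀ t ∈ Icc a b, HasDerivWithinAt k (A t (k t)) (Icc a b) t) →
      ∀ t ∈ Ico a b, HasDerivWithinAt k (A t (k t)) (Ici t) t := fun hk t ht =>
    (hk t (Ico_subset_Icc_self ht)).mono_of_mem_nhdsWithin (Icc_mem_nhdsGE_of_mem ht)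
  exact ODE_solution_unique_of_mem_Icc_right
    (fun t ht => ((A t).lipschitz.weaken (hK t (Ico_subset_Icc_self ht))).lipschitzOnWith
      (s := univ))
    (fun t ht => (hf t ht).continuousWithinAt) (forward hf) (fun _ _ => mem_univ _)
    (fun t ht => (hg t ht).continuousWithinAt) (forward hg) (fun _ _ => mem_univ _) h

variable [CompleteSpace E]

theorem exists_hasDerivWithinAt_Icc_of_nnnorm_le {K : ℝ≥0} (hab : a ≤ b)
    (hA : ContinuousOn A (Icc a b)) (hK : ∀ t ∈ Icc a b, ‖A t‖₊ ≤ K)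
    (hlen : K * (b - a) ≤ 1 / 2) (x₀ : E) :
    ∃ f : ℝ → E, f a = x₀ ∧ ∀ t ∈ Icc a b, HasDerivWithinAt f (A t (f t)) (Icc a b) t := by
  have hPL : IsPicardLindelof (fun t x => A t x) (⟨a, left_mem_Icc.2 hab⟩ : Icc a b) x₀
      ‖x₀‖₊ 0 (2 * K * ‖x₀‖₊) K :=
    { lipschitzOnWith := fun t ht => ((A t).lipschitz.weaken (hK t ht)).lipschitzOnWith
      continuousOn := fun _ _ => hA.clm_apply continuousOn_const
      norm_le := fun t ht x hx => by
        have hx : ‖x‖ ≤ ‖x₀‖ + ‖x₀‖ := norm_le_of_mem_closedBall hx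
        calc ‖A t x‖ ≤ ‖A t‖ * ‖x‖ := (A t).le_opNorm x
          _ ≤ K * (‖x₀‖ + ‖x₀‖) := by gcongr; exact hK t ht
          _ = _ := by push_cast; ring
      mul_max_le := by
        rw [sub_self, max_eq_left (sub_nonneg.2 hab)]
        push_cast
        nlinarith [norm_nonneg x₀] }
  exact hPL.exists_eq_forall_mem_Icc_hasDerivWithinAt₀

theorem exists_hasDerivWithinAt_Icc (hA : ContinuousOn A (Icc a b)) (x₀ : E) :
    ∃ f : ℝ → E, f a = x₀ ∧ ∀ t ∈ Icc a b, HasDerivWithinAt f (A t (f t)) (Icc a b) t := by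
  rcases lt_or_ge b a with hba | hab
  · exact ⟨fun _ => x₀, rfl, fun t ht => absurd (ht.1.trans ht.2) hba.not_ge⟩
  obtain ⟨K, hK⟩ := isCompact_Icc.exists_nnnorm_le_of_continuousOn hA
  set ε : ℝ := 1 / (2 * (K + 1))
  have hε : 0 < ε := by positivity
  have short : ∀ c d, a ≤ c → c ≤ d → d ≤ b → d - c ≤ ε → ∀ x : E, ∃ f : ℝ → E, f c = x ∧
      ∀ t ∈ Icc c d, HasDerivWithinAt f (A t (f t)) (Icc c d) t := by
    intro c d hac hcd hdb hdc x
    have hsub : Icc c d ⊆ Icc a b := Icc_subset_Icc hac hdb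
    refine exists_hasDerivWithinAt_Icc_of_nnnorm_le hcd (hA.mono hsub) (fun t ht => hK t (hsub ht))
      ?_ x
    calc (K : ℝ) * (d - c) ≤ K * ε := by gcongr
      _ ≤ 1 / 2 := by
        rw [mul_one_div, div_le_div_iff₀ (by positivity) two_pos]; nlinarith [K.coe_nonneg]
  have steps : ∀ n : ℕ, ∀ c, a ≤ c → c ≤ b → b - c ≤ n * ε → ∀ x : E, ∃ f : ℝ → E, f c = x ∧
      ∀ t ∈ Icc c b, HasDerivWithinAt f (A t (f t)) (Icc c b) t := by
    intro n
    induction n with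
    | zero => exact fun c hac hcb hn => short c b hac hcb le_rfl (by simp at hn; linarith)
    | succ n ih =>
      intro c hac hcb hn x
      by_cases hshort : b - c ≤ ε
      · exact short c b hac hcb le_rfl hshort x
      obtain ⟨f, hf₀, hf⟩ := short c (c + ε) hac (by linarith) (by linarith) (by simp) x
      obtain ⟨g, hg₀, hg⟩ := ih (c + ε) (by linarith) (by linarith) (by push_cast at hn; linarith)
        (f (c + ε))
      obtain ⟨h, hh₀, hh⟩ := exists_hasDerivWithinAt_Icc_glue (by linarith) (by linarith) hf hg
        hg₀.symm
      exact ⟨h, hh₀.trans hf₀, hh⟩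
  obtain ⟨n, hn⟩ := exists_nat_ge ((b - a) / ε)
  exact steps n a le_rfl hab ((div_le_iff₀ hε).1 hn) x₀

theorem exists_hasDerivWithinAt_Ici (hA : ContinuousOn A (Ici a)) (x₀ : E) :
    ∃ f : ℝ → E, f a = x₀ ∧ ∀ t ∈ Ici a, HasDerivWithinAt f (A t (f t)) (Ici a) t := by
  choose sol hsol₀ hsol using fun T : ℝ =>
    exists_hasDerivWithinAt_Icc (hA.mono (Icc_subset_Ici_self : Icc a T ⊆ Ici a)) x₀
  have consistent : ∀ {T T' : ℝ}, T ≤ T' → EqOn (sol T) (sol T') (Icc a T) := fun hTT' =>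
    eqOn_Icc_of_hasDerivWithinAt (hA.mono Icc_subset_Ici_self) (hsol _)
      (fun t ht => (hsol _ t ⟨ht.1, ht.2.trans hTT'⟩).mono (Icc_subset_Icc_right hTT'))
      ((hsol₀ _).trans (hsol₀ _).symm)
  refine ⟨fun t => sol (t + 1) t, hsol₀ _, fun t (ht : a ≤ t) => ?_⟩
  have heq : EqOn (fun s => sol (s + 1) s) (sol (t + 1)) (Icc a (t + 1)) := fun s hs => by
    rcases le_total s t with hst | hts
    · exact consistent (by linarith) ⟨hs.1, by linarith⟩
    · exact (consistent (by linarith) hs).symm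
  have hmem : Icc a (t + 1) ∈ 𝓝[Ici a] t :=
    mem_of_superset (inter_mem_nhdsWithin _ (Iio_mem_nhds (lt_add_one t)))
      fun s hs => ⟨hs.1, hs.2.le⟩
  exact ((hsol _ t ⟨ht, by linarith⟩).mono_of_mem_nhdsWithin hmem).congr_of_eventuallyEq
    (eventually_of_mem hmem heq) (heq ⟨ht, by linarith⟩)

end LinearODE

end

lemma strictMonoOn_of_hasDerivWithinAt_pos_of_subset {s D : Set ℝ} {f f' : ℝ → ℝ}
    (hD : Convex ℝ D) (hDs : D ⊆ s) (hf : ∀ t ∈ s, HasDerivWithinAt f (f' t) s t)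
    (hf' : ∀ t ∈ interior D, 0 < f' t) : StrictMonoOn f D :=
  strictMonoOn_of_hasDerivWithinAt_pos hD
    (fun t ht => (hf t (hDs ht)).continuousWithinAt.mono hDs)
    (fun t ht => (hf t (hDs (interior_subset ht))).mono (interior_subset.trans hDs)) hf'

lemma antitoneOn_of_hasDerivWithinAt_nonpos_of_subset {s D : Set ℝ} {f f' : ℝ → ℝ}
    (hD : Convex ℝ D) (hDs : D ⊆ s) (hf : ∀ t ∈ s, HasDerivWithinAt f (f' t) s t)
    (hf' : ∀ t ∈ interior D, f' t ≤ 0) : AntitoneOn f D :=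
  antitoneOn_of_hasDerivWithinAt_nonpos hD
    (fun t ht => (hf t (hDs ht)).continuousWithinAt.mono hDs)
    (fun t ht => (hf t (hDs (interior_subset ht))).mono (interior_subset.trans hDs)) hf'

/-- The `sSup` is the least `c` with `φ + c ψ ≥ 0` on `s`; were `ψ / (φ + c ψ)` bounded,
`φ + (c - ε) ψ` would stay positive for small `ε > 0`. -/
theorem not_bddAbove_div_add_sSup_mul {s : Set ℝ} {φ ψ : ℝ → ℝ} (hs : s.Nonempty)
    (hψ : ∀ t ∈ s, 0 < ψ t)
    (hpos : ∀ t ∈ s, 0 < φ t + sSup ((fun t => -φ t / ψ t) '' s) * ψ t) :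
    ¬ BddAbove ((fun t => ψ t / (φ t + sSup ((fun t => -φ t / ψ t) '' s) * ψ t)) '' s) := by
  set c := sSup ((fun t => -φ t / ψ t) '' s)
  rintro ⟨M, hM⟩
  have hM' : 0 < |M| + 1 := by positivity
  obtain ⟨_, ⟨t, ht, rfl⟩, hlt⟩ :=
    exists_lt_of_lt_csSup (hs.image _) (sub_lt_self c (one_div_pos.2 hM'))
  rw [lt_div_iff₀ (hψ t ht)] at hlt
  have hbig : |M| + 1 < ψ t / (φ t + c * ψ t) := by
    rw [lt_div_iff₀ (hpos t ht)]
    have := mul_lt_mul_of_pos_left hlt hM'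
    field_simp at this
    linarith
  exact (hbig.trans_le (hM (mem_image_of_mem _ ht))).not_ge (le_abs_self M |>.trans (by linarith))

/-- The companion matrix `[[0, 1], [Q t, P t]]` of `u'' = P u' + Q u`. -/
def companion (P Q : ℝ → ℝ) (t : ℝ) : ℝ × ℝ →L[ℝ] ℝ × ℝ :=
  (ContinuousLinearMap.snd ℝ ℝ ℝ).prod
    (P t • ContinuousLinearMap.snd ℝ ℝ ℝ + Q t • ContinuousLinearMap.fst ℝ ℝ ℝ)

structure IsSolution (P Q u v : ℝ → ℝ) : Prop where
  hasDerivWithinAt_u : ∀ t ∈ Ici (0 : ℝ), HasDerivWithinAt u (v t) (Ici 0) t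
  hasDerivWithinAt_v : ∀ t ∈ Ici (0 : ℝ), HasDerivWithinAt v (P t * v t + Q t * u t) (Ici 0) t

/-- The `max` extends `P` continuously past `0`, so that the integral is differentiable. -/
noncomputable def integratingFactor (P : ℝ → ℝ) (t : ℝ) : ℝ :=
  exp (-∫ s in (0 : ℝ)..t, P (max s 0))

section Solutions

variable {P Q u v u₂ v₂ : ℝ → ℝ} {t : ℝ}

theorem exists_isSolution (hP : ContinuousOn P (Ici 0)) (hQ : ContinuousOn Q (Ici 0))
    (x₀ y₀ : ℝ) : ∃ u v, IsSolution P Q u v ∧ u 0 = x₀ ∧ v 0 = y₀ := by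
  have hA : ContinuousOn (companion P Q) (Ici 0) :=
    (ContinuousLinearMap.prodₗᵢ ℝ).continuous.comp_continuousOn
      (continuousOn_const.prodMk ((hP.smul continuousOn_const).add (hQ.smul continuousOn_const)))
  obtain ⟨f, hf₀, hf⟩ := LinearODE.exists_hasDerivWithinAt_Ici hA (x₀, y₀)
  refine ⟨fun t => (f t).1, fun t => (f t).2, ⟨fun t ht => ?_, fun t ht => ?_⟩, by simp [hf₀],
    by simp [hf₀]⟩
  · exact (ContinuousLinearMap.fst ℝ ℝ ℝ).hasFDerivAt.comp_hasDerivWithinAt t (hf t ht)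
  · exact (ContinuousLinearMap.snd ℝ ℝ ℝ).hasFDerivAt.comp_hasDerivWithinAt t (hf t ht)

lemma integratingFactor_pos : 0 < integratingFactor P t := exp_pos _

@[simp] lemma integratingFactor_zero : integratingFactor P 0 = 1 := by simp [integratingFactor]

lemma hasDerivAt_integratingFactor (hP : ContinuousOn P (Ici 0)) (ht : t ∈ Ici 0) :
    HasDerivAt (integratingFactor P) (-P t * integratingFactor P t) t := by
  have hP' : Continuous fun s => P (max s 0) :=
    hP.comp_continuous (continuous_id.max continuous_const) fun s => le_max_right s 0
  have := ((hP'.integral_hasStrictDerivAt 0 t).hasDerivAt.neg).exp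
  rwa [max_eq_left ht, mul_comm] at this

namespace IsSolution

theorem add_const_mul (h₁ : IsSolution P Q u v) (h₂ : IsSolution P Q u₂ v₂) (c : ℝ) :
    IsSolution P Q (fun t => u t + c * u₂ t) (fun t => v t + c * v₂ t) where
  hasDerivWithinAt_u t ht :=
    (h₁.hasDerivWithinAt_u t ht).add ((h₂.hasDerivWithinAt_u t ht).const_mul c)
  hasDerivWithinAt_v t ht :=
    ((h₁.hasDerivWithinAt_v t ht).add ((h₂.hasDerivWithinAt_v t ht).const_mul c)).congr_deriv
      (by ring)

theorem continuousOn_u (h : IsSolution P Q u v) : ContinuousOn u (Ici 0) :=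
  fun t ht => (h.hasDerivWithinAt_u t ht).continuousWithinAt

/-- Abel's identity. -/
theorem integratingFactor_mul_wronskian (hP : ContinuousOn P (Ici 0)) (h₁ : IsSolution P Q u v)
    (h₂ : IsSolution P Q u₂ v₂) (ht : t ∈ Ici 0) :
    integratingFactor P t * (u t * v₂ t - v t * u₂ t) = u 0 * v₂ 0 - v 0 * u₂ 0 := by
  have hderiv : ∀ s ∈ Ici (0 : ℝ), HasDerivWithinAt
      (fun s => integratingFactor P s * (u s * v₂ s - v s * u₂ s)) 0 (Ici 0) s := fun s hs =>
    ((hasDerivAt_integratingFactor hP hs).hasDerivWithinAt.mul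
      (((h₁.hasDerivWithinAt_u s hs).mul (h₂.hasDerivWithinAt_v s hs)).sub
        ((h₁.hasDerivWithinAt_v s hs).mul (h₂.hasDerivWithinAt_u s hs)))).congr_deriv
      (by simp only [Pi.sub_apply, Pi.mul_apply]; ring)
  have := constant_of_has_deriv_right_zero
    (fun s hs => (hderiv s hs.1).continuousWithinAt.mono fun _ hr => hr.1)
    (fun s hs => (hderiv s hs.1).mono (Ici_subset_Ici.2 hs.1)) t ⟨ht, le_rfl⟩
  simpa using this

theorem hasDerivWithinAt_integratingFactor_mul_v (hP : ContinuousOn P (Ici 0))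
    (h : IsSolution P Q u v) (ht : t ∈ Ici 0) :
    HasDerivWithinAt (fun s => integratingFactor P s * v s) (integratingFactor P t * Q t * u t)
      (Ici 0) t :=
  ((hasDerivAt_integratingFactor hP ht).hasDerivWithinAt.mul
    (h.hasDerivWithinAt_v t ht)).congr_deriv (by ring)

theorem strictMonoOn_integratingFactor_mul_v (hP : ContinuousOn P (Ici 0))
    (hQ : ∀ t ∈ Ici (0 : ℝ), 0 < Q t) (h : IsSolution P Q u v) {D : Set ℝ} (hD : Convex ℝ D)
    (hD₀ : D ⊆ Ici 0) (hu : ∀ t ∈ interior D, 0 < u t) :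
    StrictMonoOn (fun s => integratingFactor P s * v s) D :=
  strictMonoOn_of_hasDerivWithinAt_pos_of_subset hD hD₀
    (fun _ ht => h.hasDerivWithinAt_integratingFactor_mul_v hP ht) fun t ht =>
    mul_pos (mul_pos integratingFactor_pos (hQ t (hD₀ (interior_subset ht)))) (hu t ht)

/-- Up to a first zero of `u` the weighted slope `μ v` increases, so `v > 0` and `u` increases
there. -/
theorem pos_of_pos_of_nonneg (hP : ContinuousOn P (Ici 0)) (hQ : ∀ t ∈ Ici (0 : ℝ), 0 < Q t)
    (h : IsSolution P Q u v) {t₀ : ℝ} (ht₀ : 0 ≤ t₀) (hu : 0 < u t₀) (hv : 0 ≤ v t₀) :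
    ∀ t ∈ Ici t₀, 0 < u t := by
  by_contra! hneg
  set Z := Ici t₀ ∩ u ⁻¹' Iic 0
  have hZ : IsClosed Z :=
    (h.continuousOn_u.mono (Ici_subset_Ici.2 ht₀)).preimage_isClosed_of_isClosed isClosed_Ici
      isClosed_Iic
  have hZne : Z.Nonempty := hneg
  have hZbdd : BddBelow Z := ⟨t₀, fun _ hs => hs.1⟩
  set τ := sInf Z
  have hτ : τ ∈ Z := hZ.csInf_mem hZne hZbdd
  have ht₀τ : t₀ < τ := hτ.1.lt_of_ne fun h => hu.not_ge (h ▸ hτ.2)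
  have huZ : ∀ s ∈ Ico t₀ τ, 0 < u s := fun s hs =>
    lt_of_not_ge fun hus => hs.2.not_ge (csInf_le hZbdd ⟨hs.1, hus⟩)
  have hsub : Icc t₀ τ ⊆ Ici 0 := fun s hs => ht₀.trans hs.1
  have hμv := h.strictMonoOn_integratingFactor_mul_v hP hQ (convex_Icc t₀ τ) hsub fun s hs =>
    huZ s (Ioo_subset_Ico_self (interior_Icc.subset hs))
  have hv' : ∀ s ∈ interior (Icc t₀ τ), 0 < v s := fun s hs => by
    rw [interior_Icc] at hs
    have := hμv (left_mem_Icc.2 ht₀τ.le) (Ioo_subset_Icc_self hs) hs.1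
    exact pos_of_mul_pos_right ((mul_nonneg integratingFactor_pos.le hv).trans_lt this)
      integratingFactor_pos.le
  have hmono := strictMonoOn_of_hasDerivWithinAt_pos_of_subset (convex_Icc t₀ τ) hsub
    h.hasDerivWithinAt_u hv'
  exact (hu.trans (hmono (left_mem_Icc.2 ht₀τ.le) (right_mem_Icc.2 ht₀τ.le) ht₀τ)).not_ge hτ.2

theorem pos_of_eq_zero_of_pos (hP : ContinuousOn P (Ici 0)) (hQ : ∀ t ∈ Ici (0 : ℝ), 0 < Q t)
    (h : IsSolution P Q u v) (hu : u 0 = 0) (hv : 0 < v 0) : ∀ t ∈ Ioi 0, 0 < u t := by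
  intro t ht
  have hev : ∀ᶠ s in 𝓝[≥] (0 : ℝ), 0 < v s :=
    (h.hasDerivWithinAt_v 0 self_mem_Ici).continuousWithinAt.eventually (lt_mem_nhds hv)
  obtain ⟨δ, hδ, hδv⟩ := mem_nhdsGE_iff_exists_Ico_subset.1 hev
  set c := min t (δ / 2)
  have hc : 0 < c := lt_min ht (half_pos hδ)
  have hvc : ∀ s ∈ Icc 0 c, 0 < v s := fun s hs =>
    hδv ⟨hs.1, hs.2.trans_lt ((min_le_right _ _).trans_lt (half_lt_self hδ))⟩
  have hmono := strictMonoOn_of_hasDerivWithinAt_pos_of_subset (convex_Icc 0 c)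
    (fun _ hs => hs.1) h.hasDerivWithinAt_u fun s hs => hvc s (interior_subset hs)
  have huc : 0 < u c := hu ▸ hmono (left_mem_Icc.2 hc.le) (right_mem_Icc.2 hc.le) hc
  exact h.pos_of_pos_of_nonneg hP hQ hc.le huc (hvc c (right_mem_Icc.2 hc.le)).le t
    (show c ≤ t from min_le_left _ _)

/-- At an interior zero of a nonnegative solution also `v` vanishes, which a nonzero Wronskian
forbids. -/
theorem pos_of_nonneg (hP : ContinuousOn P (Ici 0)) (h : IsSolution P Q u v)
    (h₂ : IsSolution P Q u₂ v₂) (hW : u 0 * v₂ 0 - v 0 * u₂ 0 ≠ 0) (hu : ∀ t ∈ Ici 0, 0 ≤ u t) :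
    ∀ t ∈ Ioi 0, 0 < u t := by
  intro t ht
  refine (hu t (Ioi_subset_Ici_self ht)).lt_of_ne fun hut => hW ?_
  have hmin : IsLocalMin u t :=
    mem_of_superset (Ioi_mem_nhds ht) fun s hs => hut ▸ hu s (Ioi_subset_Ici_self hs)
  have hvt : v t = 0 :=
    hmin.hasDerivAt_eq_zero
      ((h.hasDerivWithinAt_u t (Ioi_subset_Ici_self ht)).hasDerivAt (Ici_mem_nhds ht))
  rw [← h.integratingFactor_mul_wronskian hP h₂ (Ioi_subset_Ici_self ht), ← hut, hvt]
  ring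

/-- Once `μ v ≥ c > 0`, the term `k / u` with `k = |W| / c` absorbs the Wronskian term
`W / (μ u²)` in the derivative of `u₂ / u`. -/
theorem antitoneOn_add_div (hP : ContinuousOn P (Ici 0)) (h : IsSolution P Q u v)
    (h₂ : IsSolution P Q u₂ v₂) (hu : ∀ t ∈ Ici 0, 0 < u t) {c t₁ : ℝ} (hc : 0 < c)
    (ht₁ : 0 ≤ t₁) (hcv : ∀ s ∈ Ici t₁, c ≤ integratingFactor P s * v s) :
    AntitoneOn (fun s => (u₂ s + |u 0 * v₂ 0 - v 0 * u₂ 0| / c) / u s) (Ici t₁) := by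
  set k := |u 0 * v₂ 0 - v 0 * u₂ 0| / c
  refine antitoneOn_of_hasDerivWithinAt_nonpos_of_subset (convex_Ici t₁) (Ici_subset_Ici.2 ht₁)
    (fun s hs => ((h₂.hasDerivWithinAt_u s hs).add_const k).div (h.hasDerivWithinAt_u s hs)
      (hu s hs).ne') fun s hs => ?_
  rw [interior_Ici] at hs
  have hW := h.integratingFactor_mul_wronskian hP h₂ (ht₁.trans hs.le)
  have hnum : integratingFactor P s * (v₂ s * u s - (u₂ s + k) * v s) ≤ 0 :=
    calc integratingFactor P s * (v₂ s * u s - (u₂ s + k) * v s)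
        = (u 0 * v₂ 0 - v 0 * u₂ 0) - k * (integratingFactor P s * v s) := by rw [← hW]; ring
      _ ≤ |u 0 * v₂ 0 - v 0 * u₂ 0| - k * c := by
        gcongr
        · exact le_abs_self _
        · exact hcv s (mem_Ici.2 hs.le)
      _ = 0 := by simp only [k]; field_simp; ring
  exact div_nonpos_of_nonpos_of_nonneg (nonpos_of_mul_nonpos_right hnum integratingFactor_pos)
    (sq_nonneg _)

theorem bddAbove_div_of_nonneg (hP : ContinuousOn P (Ici 0)) (hQ : ∀ t ∈ Ici (0 : ℝ), 0 < Q t)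
    (h : IsSolution P Q u v) (h₂ : IsSolution P Q u₂ v₂) (hu : ∀ t ∈ Ici 0, 0 < u t) {t₀ : ℝ}
    (ht₀ : 0 ≤ t₀) (hv : 0 ≤ v t₀) : BddAbove ((fun t => u₂ t / u t) '' Ici 0) := by
  have hμv := h.strictMonoOn_integratingFactor_mul_v hP hQ (convex_Ici t₀) (Ici_subset_Ici.2 ht₀)
    fun s hs => hu s (ht₀.trans (interior_subset hs : t₀ ≤ s))
  set t₁ := t₀ + 1
  have ht₀₁ : t₀ ≤ t₁ := (lt_add_one t₀).le
  set c := integratingFactor P t₁ * v t₁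
  have hc : 0 < c := (mul_nonneg integratingFactor_pos.le hv).trans_lt
    (hμv self_mem_Ici ht₀₁ (lt_add_one t₀))
  have hcv : ∀ s ∈ Ici t₁, c ≤ integratingFactor P s * v s := fun s hs =>
    hμv.monotoneOn ht₀₁ (ht₀₁.trans hs) hs
  have hanti := h.antitoneOn_add_div hP h₂ hu hc (ht₀.trans ht₀₁) hcv
  obtain ⟨M, hM⟩ := (isCompact_Icc (a := 0) (b := t₁)).bddAbove_image (f := fun t => u₂ t / u t)
    ((h₂.continuousOn_u.div h.continuousOn_u fun t ht => (hu t ht).ne').mono Icc_subset_Ici_self)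
  refine ⟨max M ((u₂ t₁ + |u 0 * v₂ 0 - v 0 * u₂ 0| / c) / u t₁), ?_⟩
  rintro _ ⟨s, hs, rfl⟩
  rcases le_total s t₁ with hst | hts
  · exact (hM (mem_image_of_mem _ ⟨hs, hst⟩)).trans (le_max_left _ _)
  · calc u₂ s / u s ≤ (u₂ s + |u 0 * v₂ 0 - v 0 * u₂ 0| / c) / u s := by
          have := hu s hs
          gcongr
          exact le_add_of_nonneg_right (by positivity)
      _ ≤ _ := hanti self_mem_Ici hts hts
      _ ≤ _ := le_max_right _ _

end IsSolution

theorem exists_isSolution_pos_deriv_neg (hP : ContinuousOn P (Ici 0))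
    (hQ : ContinuousOn Q (Ici 0)) (hQpos : ∀ t ∈ Ici (0 : ℝ), 0 < Q t) :
    ∃ u v, IsSolution P Q u v ∧ ∀ t ∈ Ici 0, 0 < u t ∧ v t < 0 := by
  obtain ⟨φ, φ', hφ, hφ₀, hφ'₀⟩ := exists_isSolution hP hQ 1 0
  obtain ⟨ψ, ψ', hψ, hψ₀, hψ'₀⟩ := exists_isSolution hP hQ 0 1
  have hφpos : ∀ t ∈ Ici 0, 0 < φ t :=
    hφ.pos_of_pos_of_nonneg hP hQpos le_rfl (by simp [hφ₀]) (by simp [hφ'₀])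
  have hψpos : ∀ t ∈ Ioi 0, 0 < ψ t := hψ.pos_of_eq_zero_of_pos hP hQpos hψ₀ (by simp [hψ'₀])
  set S := (fun t => -φ t / ψ t) '' Ioi 0
  have hS : BddAbove S := ⟨0, by
    rintro _ ⟨t, ht, rfl⟩
    exact (div_neg_of_neg_of_pos (neg_neg_of_pos (hφpos t (Ioi_subset_Ici_self ht)))
      (hψpos t ht)).le⟩
  set c := sSup S
  have hu := hφ.add_const_mul hψ c
  have hnonneg : ∀ t ∈ Ici 0, 0 ≤ φ t + c * ψ t := by
    intro t ht
    rcases (mem_Ici.1 ht).eq_or_lt with rfl | ht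
    · simp [hφ₀, hψ₀]
    · have := le_csSup hS (mem_image_of_mem _ ht)
      rw [div_le_iff₀ (hψpos t ht)] at this
      linarith
  have hpos : ∀ t ∈ Ici 0, 0 < φ t + c * ψ t := by
    intro t ht
    rcases (mem_Ici.1 ht).eq_or_lt with rfl | ht
    · simp [hφ₀, hψ₀]
    · exact hu.pos_of_nonneg hP hψ (by simp [hφ₀, hψ₀, hφ'₀, hψ'₀]) hnonneg t ht
  refine ⟨_, _, hu, fun t ht => ⟨hpos t ht, ?_⟩⟩
  by_contra! hv
  exact not_bddAbove_div_add_sSup_mul nonempty_Ioi hψpos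
    (fun t ht => hpos t (Ioi_subset_Ici_self ht))
    ((hu.bddAbove_div_of_nonneg hP hQpos hψ hpos ht hv).mono (image_mono Ioi_subset_Ici_self))

end Solutions

/-- Existence of a positive decreasing solution of `u'' = P u' + Q u` on `[0,∞)`, `Q > 0`. -/
theorem ode_positive_decreasing_solution (P Q : ℝ → ℝ)
    (hP : ContinuousOn P (Ici 0)) (hQ : ContinuousOn Q (Ici 0))
    (hQpos : ∀ t ∈ Ici (0:ℝ), 0 < Q t) :
    ∃ u u' : ℝ → ℝ,
      (∀ t ∈ Ici (0:ℝ), HasDerivWithinAt u (u' t) (Ici 0) t) ∧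
      (∀ t ∈ Ici (0:ℝ), HasDerivWithinAt u' (P t * u' t + Q t * u t) (Ici 0) t) ∧
      (∀ t ∈ Ici (0:ℝ), 0 < u t ∧ u' t < 0) := by
  obtain ⟨u, v, hu, hpos⟩ := exists_isSolution_pos_deriv_neg hP hQ hQpos
  exact ⟨u, v, hu.hasDerivWithinAt_u, hu.hasDerivWithinAt_v, hpos⟩
end

section
/- Let P, Q be continuous functions on [0,∞) with 1 + Q > 0 and suppose there exist constants d, C₀ > 0 with |P(t)|, |Q(t)| ≤ C₀ e^{-dt} for all t. Then there exists a solution u₁ of u'' = P u' + (1+Q)u and a constant C > 0 such that C⁻¹ e^t ≤ u₁(t) ≤ C e^t and C⁻¹ e^t ≤ u₁'(t) ≤ C e^t for all t ≥ 0. -/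
open Set Real Filter Topology
open scoped NNReal

/-!
The logarithmic derivative `r = u' / u` of a positive solution satisfies the Riccati equation
`r' = P r + (1 + Q) - r²`. Truncating the unknown to `[0, C₀ + 2]` gives a globally Lipschitz,
bounded field and hence a global solution with `r 0 = 1`; barrier arguments show that it never
leaves `(0, C₀ + 2)`, so it solves the untruncated equation. Since
`r' = (P r + Q) - (r + 1)(r - 1)` with `r + 1 ≥ 1` and `P r + Q = O(e^{-dt})`, comparison with
`B e^{-ct}` gives `|r - 1| ≤ B e^{-ct}`. Hence `A = ∫₀ᵗ r` stays within bounded distance of `t`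
and `r` is bounded below by a positive constant, so `u₁ = e^A`, `u₁' = r e^A` grow like `e^t`.
-/

theorem pos_of_hasDerivWithinAt_Ici {r r' : ℝ → ℝ} {a : ℝ}
    (hr : ∀ t ∈ Ici a, HasDerivWithinAt r (r' t) (Ici a) t) (ha : 0 < r a)
    (hr' : ∀ t ∈ Ici a, r t = 0 → 0 < r' t) :
    ∀ t ∈ Ici a, 0 < r t := by
  have hnonneg : ∀ t ∈ Ici a, 0 ≤ r t := by
    intro t ht
    have hsub : Icc a t ⊆ Ici a := Icc_subset_Ici_self
    have := image_le_of_deriv_right_lt_deriv_boundary' (f := fun s => -r s) (f' := fun s => -r' s)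
      (B := 0) (B' := 0) (fun s hs => (hr s (hsub hs)).continuousWithinAt.neg.mono hsub)
      (fun s hs => (hr s hs.1).neg.mono (Ici_subset_Ici.2 hs.1)) (by simpa using ha.le)
      continuousOn_const (fun s _ => hasDerivWithinAt_const _ _ _)
      (fun s hs h => by simpa using hr' s hs.1 (neg_eq_zero.1 h)) (right_mem_Icc.2 ht)
    simpa using this
  intro t ht
  refine (hnonneg t ht).lt_of_ne' fun h0 => ?_
  rcases (show a ≤ t from ht).eq_or_lt with rfl | hat
  · exact ha.ne' h0
  -- an interior zero of a nonnegative function is a local minimum, so `r' t = 0`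
  have hmin : IsLocalMin r t := by
    filter_upwards [Ici_mem_nhds hat] with s hs
    exact h0 ▸ hnonneg s hs
  exact (hr' t ht h0).ne' (hmin.hasDerivAt_eq_zero ((hr t ht).hasDerivAt (Ici_mem_nhds hat)))

theorem exists_forall_hasDerivWithinAt_Ici {E : Type*} [NormedAddCommGroup E] [NormedSpace ℝ E]
    [CompleteSpace E] {f : ℝ → E → E} {a L : ℝ} {K : ℝ≥0}
    (hlip : ∀ t ∈ Ici a, LipschitzWith K (f t)) (hcont : ∀ x, ContinuousOn (f · x) (Ici a))
    (hbound : ∀ t ∈ Ici a, ∀ x, ‖f t x‖ ≤ L) (x₀ : E) :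
    ∃ α : ℝ → E, α a = x₀ ∧ ∀ t ∈ Ici a, HasDerivWithinAt α (f t (α t)) (Ici a) t := by
  have hlocal (n : ℕ) : ∃ α : ℝ → E, α a = x₀ ∧
      ∀ t ∈ Icc a (a + n), HasDerivWithinAt α (f t (α t)) (Icc a (a + n)) t := by
    have hsub : Icc a (a + n) ⊆ Ici a := Icc_subset_Ici_self
    have hpl : IsPicardLindelof f (tmin := a) (tmax := a + n)
        ⟨a, left_mem_Icc.2 (by simp)⟩ x₀ (L.toNNReal * n) 0 L.toNNReal K :=
      { lipschitzOnWith := fun t ht => (hlip t (hsub ht)).lipschitzOnWith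
        continuousOn := fun x _ => (hcont x).mono hsub
        norm_le := fun t ht x _ => (hbound t (hsub ht) x).trans (le_coe_toNNReal L)
        mul_max_le := by simp }
    exact hpl.exists_eq_forall_mem_Icc_hasDerivWithinAt₀
  choose α hα₀ hα using hlocal
  have hright (n : ℕ) : ∀ t ∈ Ico a (a + n), HasDerivWithinAt (α n) (f t (α n t)) (Ici t) t :=
    fun t ht => (hα n t (Ico_subset_Icc_self ht)).mono_of_mem_nhdsWithin (Icc_mem_nhdsGE_of_mem ht)
  have hcontα (n : ℕ) : ContinuousOn (α n) (Icc a (a + n)) :=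
    fun t ht => (hα n t ht).continuousWithinAt
  have hunique {m n : ℕ} (hmn : m ≤ n) : EqOn (α m) (α n) (Icc a (a + m)) := by
    have hsub : Icc a (a + m) ⊆ Icc a (a + n) := Icc_subset_Icc_right (by simpa using hmn)
    exact ODE_solution_unique_of_mem_Icc_right (s := fun _ => univ)
      (fun t ht => (hlip t ht.1).lipschitzOnWith) (hcontα m) (hright m) (fun _ _ => trivial)
      ((hcontα n).mono hsub) (fun t ht => hright n t ⟨ht.1, ht.2.trans_le (by simpa using hmn)⟩)
      (fun _ _ => trivial) ((hα₀ m).trans (hα₀ n).symm)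
  have hagree {m n : ℕ} {s : ℝ} (hs : s ∈ Icc a (a + m)) (hsn : s ≤ a + n) : α m s = α n s := by
    rcases le_total m n with hmn | hnm
    · exact hunique hmn hs
    · exact (hunique hnm ⟨hs.1, hsn⟩).symm
  set β : ℝ → E := fun t => α (⌈t - a⌉₊ + 1) t
  have hβα {n : ℕ} {s : ℝ} (hs : s ∈ Icc a (a + n)) : β s = α n s :=
    hagree ⟨hs.1, by push_cast; linarith [Nat.le_ceil (s - a)]⟩ hs.2
  refine ⟨β, (hβα (n := 0) (by simp)).trans (hα₀ 0), fun t ht => ?_⟩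
  set N := ⌈t - a⌉₊ + 1
  have htN : t < a + N := by push_cast [N]; linarith [Nat.le_ceil (t - a)]
  have hnhds : Icc a (a + N) ∈ 𝓝[Ici a] t := by
    rw [← Ici_inter_Iic]
    exact inter_mem_nhdsWithin _ (Iic_mem_nhds htN)
  have heq : β =ᶠ[𝓝[Ici a] t] α N := eventually_of_mem hnhds fun s hs => hβα hs
  rw [hβα ⟨ht, htN.le⟩]
  exact ((hα N t ⟨ht, htN.le⟩).mono_of_mem_nhdsWithin hnhds).congr_of_eventuallyEq heq
    (hβα ⟨ht, htN.le⟩)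

theorem lt_mul_exp_neg_of_hasDerivWithinAt {y a b : ℝ → ℝ} {B K c d : ℝ}
    (hy : ∀ t ∈ Ici 0, HasDerivWithinAt y (b t - a t * y t) (Ici 0) t)
    (ha : ∀ t ∈ Ici 0, 1 ≤ a t) (hb : ∀ t ∈ Ici 0, b t ≤ K * exp (-d * t))
    (hK : 0 ≤ K) (hB : 0 ≤ B) (hcd : c ≤ d) (hKB : K < (1 - c) * B) (hy0 : y 0 < B) :
    ∀ t ∈ Ici 0, y t < B * exp (-c * t) := by
  have hbarrier (t : ℝ) : HasDerivAt (fun t => B * exp (-c * t)) (-c * (B * exp (-c * t))) t :=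
    (((hasDerivAt_id' t).const_mul (-c)).exp.const_mul B).congr_deriv (by ring)
  have hpos := pos_of_hasDerivWithinAt_Ici (r := fun t => B * exp (-c * t) - y t)
    (fun t ht => (hbarrier t).hasDerivWithinAt.sub (hy t ht)) (by simpa using hy0)
    fun t ht h => ?_
  · exact fun t ht => sub_pos.1 (hpos t ht)
  -- at a contact point `y t = B e^{-ct} ≥ 0`, so `a t * y t ≥ y t`
  have hyt : y t = B * exp (-c * t) := (sub_eq_zero.1 h).symm
  have hdecay : exp (-d * t) ≤ exp (-c * t) := exp_le_exp.2 (by nlinarith [mem_Ici.1 ht])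
  have hay : y t ≤ a t * y t := le_mul_of_one_le_left (hyt ▸ by positivity) (ha t ht)
  have hexp := exp_pos (-c * t)
  nlinarith [hb t ht, mul_le_mul_of_nonneg_left hdecay hK]

theorem abs_le_mul_exp_neg_of_hasDerivWithinAt {y a b : ℝ → ℝ} {B K c d : ℝ}
    (hy : ∀ t ∈ Ici 0, HasDerivWithinAt y (b t - a t * y t) (Ici 0) t)
    (ha : ∀ t ∈ Ici 0, 1 ≤ a t) (hb : ∀ t ∈ Ici 0, |b t| ≤ K * exp (-d * t))
    (hK : 0 ≤ K) (hB : 0 ≤ B) (hcd : c ≤ d) (hKB : K < (1 - c) * B) (hy0 : |y 0| < B) :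
    ∀ t ∈ Ici 0, |y t| ≤ B * exp (-c * t) := by
  have hup := lt_mul_exp_neg_of_hasDerivWithinAt hy ha (fun t ht => (le_abs_self _).trans (hb t ht))
    hK hB hcd hKB (lt_of_abs_lt hy0)
  have hlow := lt_mul_exp_neg_of_hasDerivWithinAt (y := fun t => -y t) (b := fun t => -b t)
    (fun t ht => (hy t ht).fun_neg.congr_deriv (by ring)) ha
    (fun t ht => (neg_le_abs _).trans (hb t ht)) hK hB hcd hKB ((neg_le_abs _).trans_lt hy0)
  exact fun t ht => abs_le.2 ⟨by linarith [hlow t ht], (hup t ht).le⟩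

theorem exists_hasDerivAt_of_continuousOn_Ici {E : Type*} [NormedAddCommGroup E]
    [NormedSpace ℝ E] [CompleteSpace E] {f : ℝ → E} {a : ℝ} (hf : ContinuousOn f (Ici a)) :
    ∃ F : ℝ → E, F a = 0 ∧ ∀ t ∈ Ici a, HasDerivAt F (f t) t := by
  have hext : Continuous fun t => f (max a t) :=
    hf.comp_continuous (continuous_const.max continuous_id) fun t => le_max_left a t
  refine ⟨fun u => ∫ t in a..u, f (max a t), intervalIntegral.integral_same, fun t ht => ?_⟩
  simpa [max_eq_right (mem_Ici.1 ht)] using (hext.integral_hasStrictDerivAt a t).hasDerivAt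

theorem abs_sub_le_of_hasDerivAt_of_abs_le {F g : ℝ → ℝ} {B c : ℝ} (hc : 0 < c)
    (hF : ∀ t ∈ Ici 0, HasDerivAt F (g t) t) (hg : ∀ t ∈ Ici 0, |g t| ≤ B * exp (-c * t)) :
    ∀ t ∈ Ici 0, |F t - F 0| ≤ B / c := by
  intro t ht
  have hB : 0 ≤ B := by simpa using (abs_nonneg _).trans (hg 0 self_mem_Ici)
  have hbound (s : ℝ) : HasDerivAt (fun s => B / c * (1 - exp (-c * s))) (B * exp (-c * s)) s :=
    ((((hasDerivAt_id' s).const_mul (-c)).exp.const_sub 1).const_mul (B / c)).congr_deriv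
      (by field_simp)
  have := image_norm_le_of_norm_deriv_right_le_deriv_boundary (f := fun s => F s - F 0)
    (fun s hs => ((hF s hs.1).continuousAt.sub continuousAt_const).continuousWithinAt)
    (fun s hs => ((hF s hs.1).sub_const (F 0)).hasDerivWithinAt) (by simp) hbound
    (fun s hs => hg s hs.1) (right_mem_Icc.2 ht)
  calc |F t - F 0| ≤ B / c * (1 - exp (-c * t)) := this
    _ ≤ B / c := mul_le_of_le_one_right (by positivity) (by linarith [exp_pos (-c * t)])

theorem exists_pos_le_of_continuousOn_Ici {f : ℝ → ℝ} {a l : ℝ} (hf : ContinuousOn f (Ici a))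
    (hpos : ∀ t ∈ Ici a, 0 < f t) (hl : 0 < l) (hev : ∀ᶠ t in atTop, l ≤ f t) :
    ∃ ρ > 0, ∀ t ∈ Ici a, ρ ≤ f t := by
  obtain ⟨T, hT⟩ := eventually_atTop.1 hev
  obtain ⟨x₀, hx₀, hmin⟩ := isCompact_Icc.exists_isMinOn (nonempty_Icc.2 (le_max_left a T))
    (hf.mono Icc_subset_Ici_self)
  refine ⟨min (f x₀) l, lt_min (hpos x₀ hx₀.1) hl, fun t ht => ?_⟩
  rcases le_total t (max a T) with htT | hTt
  · exact (min_le_left _ _).trans (hmin ⟨ht, htT⟩)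
  · exact (min_le_right _ _).trans (hT t ((le_max_right a T).trans hTt))

theorem exists_inv_mul_exp_le_of_abs_sub_le {A r : ℝ → ℝ} {s : Set ℝ} {L ρ M : ℝ} (hρ : 0 < ρ)
    (hA : ∀ t ∈ s, |A t - t| ≤ L) (hr : ∀ t ∈ s, r t ∈ Icc ρ M) :
    ∃ C > 0, ∀ t ∈ s, C⁻¹ * exp t ≤ exp (A t) ∧ exp (A t) ≤ C * exp t ∧
      C⁻¹ * exp t ≤ r t * exp (A t) ∧ r t * exp (A t) ≤ C * exp t := by
  set m := max M ρ⁻¹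
  have hm : 0 < m := (inv_pos.2 hρ).trans_le (le_max_right _ _)
  refine ⟨exp L * m, by positivity, fun t ht => ?_⟩
  obtain ⟨hρr, hrM⟩ := hr t ht
  have hm1 : 1 ≤ m := by
    rcases le_total ρ 1 with h | h
    · exact (one_le_inv₀ hρ).2 h |>.trans (le_max_right _ _)
    · exact h.trans (hρr.trans hrM) |>.trans (le_max_left _ _)
  have hmρ : m⁻¹ ≤ ρ := inv_le_of_inv_le₀ hρ (le_max_right _ _)
  obtain ⟨hAlo, hAhi⟩ := abs_le.1 (hA t ht)
  have hlo : exp (-L) * exp t ≤ exp (A t) := by rw [← exp_add]; exact exp_le_exp.2 (by linarith)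
  have hhi : exp (A t) ≤ exp L * exp t := by rw [← exp_add]; exact exp_le_exp.2 (by linarith)
  have hCinv : (exp L * m)⁻¹ * exp t = m⁻¹ * (exp (-L) * exp t) := by
    rw [mul_inv, exp_neg]; ring
  have hr0 : 0 ≤ r t := hρ.le.trans hρr
  refine ⟨?_, ?_, ?_, ?_⟩
  · rw [hCinv]
    exact (mul_le_of_le_one_left (by positivity) (inv_le_one_of_one_le₀ hm1)).trans hlo
  · calc exp (A t) ≤ exp L * exp t := hhi
      _ ≤ exp L * m * exp t := by gcongr; exact le_mul_of_one_le_right (exp_pos L).le hm1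
  · rw [hCinv]
    calc m⁻¹ * (exp (-L) * exp t) ≤ ρ * (exp (-L) * exp t) := by gcongr
      _ ≤ r t * exp (A t) := by gcongr
  · calc r t * exp (A t) ≤ M * (exp L * exp t) := by gcongr; exact hr0.trans hrM
      _ ≤ m * (exp L * exp t) := by gcongr; exact le_max_left _ _
      _ = exp L * m * exp t := by ring

def riccatiField (P Q : ℝ → ℝ) (t x : ℝ) : ℝ := P t * x + (1 + Q t) - x ^ 2

section Riccati

variable {P Q : ℝ → ℝ} {C₀ M : ℝ}

theorem lipschitzOnWith_riccatiField {t : ℝ} (hP : |P t| ≤ C₀) :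
    LipschitzOnWith (C₀ + 2 * M).toNNReal (riccatiField P Q t) (Icc 0 M) := by
  refine LipschitzOnWith.of_dist_le' fun x hx y hy => ?_
  have hxy : |x + y| ≤ 2 * M := by rw [abs_le]; constructor <;> linarith [hx.1, hx.2, hy.1, hy.2]
  calc dist (riccatiField P Q t x) (riccatiField P Q t y) = |P t - (x + y)| * |x - y| := by
        rw [dist_eq, ← abs_mul]; unfold riccatiField; ring_nf
    _ ≤ (C₀ + 2 * M) * dist x y := by
        rw [dist_eq]; gcongr; exact (abs_sub _ _).trans (add_le_add hP hxy)

theorem abs_riccatiField_le {t x : ℝ} (hP : |P t| ≤ C₀) (hQ : |Q t| ≤ C₀) (hx : x ∈ Icc 0 M) :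
    |riccatiField P Q t x| ≤ C₀ * M + (1 + C₀) + M ^ 2 := by
  have hx' : |x| ≤ M := abs_le.2 ⟨by linarith [hx.1, hx.2], hx.2⟩
  unfold riccatiField
  calc |P t * x + (1 + Q t) - x ^ 2| ≤ |P t| * |x| + (|1| + |Q t|) + |x| ^ 2 := by
        grw [abs_sub, abs_add_le, abs_add_le 1, abs_mul, abs_pow]
    _ ≤ C₀ * M + (1 + C₀) + M ^ 2 := by
        rw [abs_one]; gcongr; exact (abs_nonneg _).trans hP

theorem exists_riccati_solution (hP : ContinuousOn P (Ici 0)) (hQ : ContinuousOn Q (Ici 0))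
    (hQ1 : ∀ t ∈ Ici 0, 0 < 1 + Q t) (hPb : ∀ t ∈ Ici 0, |P t| ≤ C₀)
    (hQb : ∀ t ∈ Ici 0, |Q t| ≤ C₀) :
    ∃ r : ℝ → ℝ, r 0 = 1 ∧ ∀ t ∈ Ici 0,
      r t ∈ Ioo 0 (C₀ + 2) ∧ HasDerivWithinAt r (riccatiField P Q t (r t)) (Ici 0) t := by
  set M := C₀ + 2
  have hC₀ : 0 ≤ C₀ := (abs_nonneg _).trans (hPb 0 self_mem_Ici)
  set clamp : ℝ → ℝ := fun x => max 0 (min M x)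
  have hclamp (x : ℝ) : clamp x ∈ Icc 0 M :=
    ⟨le_max_left _ _, max_le (by linarith) (min_le_left _ _)⟩
  have hclampLip : LipschitzWith 1 clamp := (LipschitzWith.id.const_min M).const_max 0
  obtain ⟨r, hr0, hr⟩ := exists_forall_hasDerivWithinAt_Ici
    (f := fun t x => riccatiField P Q t (clamp x)) (x₀ := 1)
    (fun t ht => by
      simpa [Function.comp_def] using lipschitzOnWith_univ.1
        ((lipschitzOnWith_riccatiField (Q := Q) (hPb t ht)).comp hclampLip.lipschitzOnWith
          fun x _ => hclamp x))
    (fun x => by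
      unfold riccatiField
      exact ((hP.mul continuousOn_const).add (continuousOn_const.add hQ)).sub continuousOn_const)
    (fun t ht x => abs_riccatiField_le (hPb t ht) (hQb t ht) (hclamp x))
  have hpos : ∀ t ∈ Ici 0, 0 < r t := by
    refine pos_of_hasDerivWithinAt_Ici hr (by simp [hr0]) fun t ht h => ?_
    simpa [clamp, h, riccatiField] using hQ1 t ht
  have hltM : ∀ t ∈ Ici 0, 0 < M - r t := by
    refine pos_of_hasDerivWithinAt_Ici (fun t ht => (hr t ht).const_sub M)
      (by simp [hr0, M]; linarith) fun t ht h => ?_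
    have hrM : r t = M := by linarith
    have hPM : P t * M ≤ C₀ * M := by gcongr; exact (le_abs_self _).trans (hPb t ht)
    have hQt : Q t ≤ C₀ := (le_abs_self _).trans (hQb t ht)
    simp only [clamp, hrM, min_self, riccatiField, max_eq_right (by linarith : (0:ℝ) ≤ M)]
    nlinarith
  refine ⟨r, hr0, fun t ht => ⟨⟨hpos t ht, by linarith [hltM t ht]⟩, ?_⟩⟩
  have hclampr : clamp (r t) = r t := by
    simp only [clamp]
    rw [min_eq_right (by linarith [hltM t ht]), max_eq_right (hpos t ht).le]
  simpa [hclampr] using hr t ht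

theorem exists_abs_sub_one_le_of_riccati {r : ℝ → ℝ} {d : ℝ} (hd : 0 < d)
    (hPb : ∀ t ∈ Ici 0, |P t| ≤ C₀ * exp (-d * t)) (hQb : ∀ t ∈ Ici 0, |Q t| ≤ C₀ * exp (-d * t))
    (hr0 : r 0 = 1) (hr : ∀ t ∈ Ici 0,
      r t ∈ Ioo 0 M ∧ HasDerivWithinAt r (riccatiField P Q t (r t)) (Ici 0) t) :
    ∃ c > 0, ∃ B, ∀ t ∈ Ici 0, |r t - 1| ≤ B * exp (-c * t) := by
  have hC₀ : 0 ≤ C₀ := by simpa using (abs_nonneg _).trans (hPb 0 self_mem_Ici)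
  have hM : 0 ≤ M := (hr 0 self_mem_Ici).1.1.le.trans (hr 0 self_mem_Ici).1.2.le
  set K := (M + 1) * C₀
  have hK : 0 ≤ K := by positivity
  -- `r - 1` solves the linear equation `y' = (P r + Q) - (r + 1) y`
  refine ⟨min d (1 / 2), lt_min hd one_half_pos, 2 * K + 1, abs_le_mul_exp_neg_of_hasDerivWithinAt
    (a := fun t => r t + 1) (b := fun t => P t * r t + Q t) (K := K) (d := d)
    (fun t ht => ((hr t ht).2.sub_const 1).congr_deriv (by unfold riccatiField; ring))
    (fun t ht => by linarith [(hr t ht).1.1]) (fun t ht => ?_) hK (by positivity)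
    (min_le_left _ _) ?_ (by simp [hr0]; linarith)⟩
  · obtain ⟨hr0, hrM⟩ := (hr t ht).1
    calc |P t * r t + Q t| ≤ |P t| * M + |Q t| := by
          grw [abs_add_le, abs_mul, abs_of_pos hr0, hrM]
      _ ≤ C₀ * exp (-d * t) * M + C₀ * exp (-d * t) := by grw [hPb t ht, hQb t ht]
      _ = K * exp (-d * t) := by ring
  · nlinarith [min_le_right d (1 / 2)]

end Riccati

/-- Existence of an exponentially growing fundamental solution of `u'' = P u' + (1+Q) u`. -/
theorem ode_growing_fundamental_solution (P Q : ℝ → ℝ) (d C₀ : ℝ)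
    (hP : ContinuousOn P (Ici 0)) (hQ : ContinuousOn Q (Ici 0))
    (hQ1 : ∀ t ∈ Ici (0:ℝ), 0 < 1 + Q t)
    (hd : 0 < d) (hC₀ : 0 < C₀)
    (hPb : ∀ t ∈ Ici (0:ℝ), |P t| ≤ C₀ * exp (-d * t))
    (hQb : ∀ t ∈ Ici (0:ℝ), |Q t| ≤ C₀ * exp (-d * t)) :
    ∃ (u₁ u₁' : ℝ → ℝ) (C : ℝ), 0 < C ∧
      (∀ t ∈ Ici (0:ℝ), HasDerivWithinAt u₁ (u₁' t) (Ici 0) t) ∧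
      (∀ t ∈ Ici (0:ℝ), HasDerivWithinAt u₁' (P t * u₁' t + (1 + Q t) * u₁ t) (Ici 0) t) ∧
      (∀ t ∈ Ici (0:ℝ),
        C⁻¹ * exp t ≤ u₁ t ∧ u₁ t ≤ C * exp t ∧
        C⁻¹ * exp t ≤ u₁' t ∧ u₁' t ≤ C * exp t) := by
  have hexp_le (t : ℝ) (ht : t ∈ Ici (0:ℝ)) : C₀ * exp (-d * t) ≤ C₀ :=
    mul_le_of_le_one_right hC₀.le (exp_le_one_iff.2 (by nlinarith [mem_Ici.1 ht]))
  obtain ⟨r, hr0, hr⟩ := exists_riccati_solution hP hQ hQ1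
    (fun t ht => (hPb t ht).trans (hexp_le t ht)) (fun t ht => (hQb t ht).trans (hexp_le t ht))
  obtain ⟨c, hc, B, hdecay⟩ := exists_abs_sub_one_le_of_riccati hd hPb hQb hr0 hr
  have hrc : ContinuousOn r (Ici 0) := fun t ht => (hr t ht).2.continuousWithinAt
  have hr_half : ∀ᶠ t in atTop, 1 / 2 ≤ r t := by
    have hlim : Tendsto (fun t => B * exp (-c * t)) atTop (𝓝 0) := by
      simpa using (tendsto_exp_atBot.comp
        (tendsto_id.const_mul_atTop_of_neg (neg_lt_zero.2 hc))).const_mul B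
    filter_upwards [hlim.eventually (ge_mem_nhds one_half_pos), eventually_ge_atTop 0] with t h h0
    linarith [abs_le.1 (hdecay t h0)]
  obtain ⟨ρ, hρ, hρr⟩ :=
    exists_pos_le_of_continuousOn_Ici hrc (fun t ht => (hr t ht).1.1) one_half_pos hr_half
  obtain ⟨A, hA0, hA⟩ := exists_hasDerivAt_of_continuousOn_Ici hrc
  have hAt := abs_sub_le_of_hasDerivAt_of_abs_le hc
    (fun t ht => (hA t ht).sub (hasDerivAt_id t)) hdecay
  obtain ⟨C, hC, hbounds⟩ := exists_inv_mul_exp_le_of_abs_sub_le hρ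
    (fun t ht => by simpa [hA0] using hAt t ht) (fun t ht => ⟨hρr t ht, (hr t ht).1.2.le⟩)
  refine ⟨fun t => exp (A t), fun t => r t * exp (A t), C, hC, fun t ht => ?_, fun t ht => ?_,
    hbounds⟩
  · exact (hA t ht).exp.hasDerivWithinAt.congr_deriv (mul_comm _ _)
  · exact ((hr t ht).2.mul (hA t ht).exp.hasDerivWithinAt).congr_deriv
      (by unfold riccatiField; ring)
end

section
/- Let P, Q be continuous functions on [0,∞) with 1 + Q > 0 and suppose there exist constants d, C₀ > 0 with |P(t)|, |Q(t)| ≤ C₀ e^{-dt} for all t. Then there exists a solution u₂ of u'' = P u' + (1+Q)u and a constant C > 0 such that C⁻¹ e^{-t} ≤ u₂(t) ≤ C e^{-t} and C⁻¹ e^{-t} ≤ -u₂'(t) ≤ C e^{-t} for all t ≥ 0. -/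
/-!
The substitution `u = e^{-t} (1 + h)`, `u' = e^{-t} (g - 1 - h)` turns the equation into the
system `h' = g`, `g' = 2 g + (Q - P) (1 + h) + P g`, a perturbation of `g' = 2 g` of size
`e^{-dt}`. Its solution decaying at `+∞` is a fixed point of an integral operator over `[t, ∞)`:
the `n`-th iterate of that operator is Lipschitz with constant `(3 C₀ / d)ⁿ / n!`, so some iterate
is a contraction. Then `eᵗ u → 1` and `eᵗ u' → -1`. Positivity of `u` and `-u'` propagates
backwards to `t = 0`: at the last zero of `u'` with `u > 0` the equation would give
`u'' = (1 + Q) u > 0`, although `u' < 0` just after it. Compactness of `[0, T]` then provides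
the constant.
-/

open Set Real MeasureTheory Filter Topology

theorem ContinuousOn.continuous_comp_max {α β : Type*} [LinearOrder α] [TopologicalSpace α]
    [OrderClosedTopology α] [TopologicalSpace β] {f : α → β} {a : α}
    (hf : ContinuousOn f (Ici a)) : Continuous fun t => f (max t a) :=
  hf.comp_continuous (continuous_id.max continuous_const) fun t => le_max_right t a

section ExponentialTail

variable {f : ℝ → ℝ} {B d τ : ℝ}

theorem integral_exp_neg_mul_Ioi (hd : 0 < d) (τ : ℝ) :
    ∫ s in Ioi τ, exp (-d * s) = exp (-d * τ) / d := by
  rw [integral_exp_mul_Ioi (neg_neg_of_pos hd), neg_div_neg_eq]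

theorem abs_integral_Ioi_le_of_abs_le_exp (hd : 0 < d)
    (hf : ∀ s ∈ Ioi τ, |f s| ≤ B * exp (-d * s)) :
    |∫ s in Ioi τ, f s| ≤ B / d * exp (-d * τ) := by
  calc |∫ s in Ioi τ, f s| ≤ ∫ s in Ioi τ, B * exp (-d * s) :=
        norm_integral_le_of_norm_le (f := f) ((exp_neg_integrableOn_Ioi τ hd).const_mul B)
          ((ae_restrict_mem measurableSet_Ioi).mono hf)
    _ = B / d * exp (-d * τ) := by
        rw [integral_const_mul, integral_exp_neg_mul_Ioi hd]; ring

theorem Continuous.integrableOn_Ioi_of_abs_le_exp (hf : Continuous f) (hd : 0 < d)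
    (hfb : ∀ s ∈ Ici 0, |f s| ≤ B * exp (-d * s)) (a : ℝ) : IntegrableOn f (Ioi a) := by
  have h0 : IntegrableOn f (Ioi 0) :=
    ((exp_neg_integrableOn_Ioi 0 hd).const_mul B).mono' hf.aestronglyMeasurable.restrict
      ((ae_restrict_mem measurableSet_Ioi).mono fun s hs => hfb s (mem_Ici.2 (le_of_lt hs)))
  rcases le_or_gt a 0 with ha | ha
  · rw [← Ioc_union_Ioi_eq_Ioi ha]
    exact hf.integrableOn_Ioc.union h0
  · exact h0.mono_set (Ioi_subset_Ioi ha.le)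

theorem MeasureTheory.IntegrableOn.exp_neg_mul_Ioi {k : ℝ} (hk : 0 ≤ k)
    (hf : IntegrableOn f (Ioi τ)) :
    IntegrableOn (fun s => exp (-k * s) * f s) (Ioi τ) := by
  refine hf.bdd_mul (c := exp (-k * τ)) (by fun_prop) ?_
  filter_upwards [ae_restrict_mem measurableSet_Ioi] with s hs
  rw [norm_of_nonneg (exp_pos _).le]
  exact exp_le_exp.2 (by nlinarith [mem_Ioi.1 hs])

theorem hasDerivAt_integral_Ioi (hf : Continuous f) (hfi : ∀ a, IntegrableOn f (Ioi a)) (t : ℝ) :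
    HasDerivAt (fun x => ∫ s in Ioi x, f s) (-f t) t := by
  have hsplit : (fun x => ∫ s in Ioi x, f s) =
      fun x => (∫ s in Ioi 0, f s) - ∫ s in (0:ℝ)..x, f s := by
    funext x
    rw [← intervalIntegral.integral_Ioi_sub_Ioi' (hfi 0) (hfi x), sub_sub_cancel]
  rw [hsplit]
  exact (hf.integral_hasStrictDerivAt 0 t).hasDerivAt.const_sub _

end ExponentialTail

section DecayingSolution

variable {F G : ℝ → ℝ} {B d : ℝ}

/-- With `g t = -∫ₜ^∞ e^{2(t-s)} F s ds` and `h t = -∫ₜ^∞ g = ∫ₜ^∞ (1 - e^{2(t-s)}) F s ds / 2`,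
this is `(h t, g t)`, the solution of `h' = g`, `g' = 2 g + F` that vanishes at `+∞`. -/
noncomputable def decayingSolution (F : ℝ → ℝ) (t : ℝ) : ℝ × ℝ :=
  ((∫ s in Ioi t, F s) / 2 - exp (2 * t) * (∫ s in Ioi t, exp (-2 * s) * F s) / 2,
    -(exp (2 * t) * ∫ s in Ioi t, exp (-2 * s) * F s))

theorem hasDerivAt_exp_two_mul_mul_integral_Ioi (hF : Continuous F)
    (hFi : ∀ a, IntegrableOn F (Ioi a)) (t : ℝ) :
    HasDerivAt (fun x => exp (2 * x) * ∫ s in Ioi x, exp (-2 * s) * F s)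
      (2 * (exp (2 * t) * ∫ s in Ioi t, exp (-2 * s) * F s) - F t) t := by
  have hexp : HasDerivAt (fun x => exp (2 * x)) (exp (2 * t) * 2) t := by
    simpa using ((hasDerivAt_id t).const_mul 2).exp
  have hint := hasDerivAt_integral_Ioi (by fun_prop)
    (fun a => (hFi a).exp_neg_mul_Ioi zero_le_two) t
  refine (hexp.mul hint).congr_deriv ?_
  rw [mul_neg, ← mul_assoc, ← exp_add]
  simp only [neg_mul, add_neg_cancel, exp_zero, one_mul]
  ring

theorem hasDerivAt_decayingSolution_fst (hF : Continuous F)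
    (hFi : ∀ a, IntegrableOn F (Ioi a)) (t : ℝ) :
    HasDerivAt (fun x => (decayingSolution F x).1) (decayingSolution F t).2 t :=
  (((hasDerivAt_integral_Ioi hF hFi t).div_const 2).sub
    ((hasDerivAt_exp_two_mul_mul_integral_Ioi hF hFi t).div_const 2)).congr_deriv
    (by simp only [decayingSolution]; ring)

theorem hasDerivAt_decayingSolution_snd (hF : Continuous F)
    (hFi : ∀ a, IntegrableOn F (Ioi a)) (t : ℝ) :
    HasDerivAt (fun x => (decayingSolution F x).2) (2 * (decayingSolution F t).2 + F t) t :=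
  (hasDerivAt_exp_two_mul_mul_integral_Ioi hF hFi t).neg.congr_deriv
    (by simp only [decayingSolution]; ring)

theorem continuous_decayingSolution (hF : Continuous F) (hFi : ∀ a, IntegrableOn F (Ioi a)) :
    Continuous (decayingSolution F) :=
  continuous_prodMk.2 ⟨
    continuous_iff_continuousAt.2 fun t => (hasDerivAt_decayingSolution_fst hF hFi t).continuousAt,
    continuous_iff_continuousAt.2 fun t => (hasDerivAt_decayingSolution_snd hF hFi t).continuousAt⟩

theorem norm_decayingSolution_le {τ : ℝ} (hd : 0 < d)
    (hFb : ∀ s ∈ Ioi τ, |F s| ≤ B * exp (-d * s)) :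
    ‖decayingSolution F τ‖ ≤ B / d * exp (-d * τ) := by
  have hfst := abs_integral_Ioi_le_of_abs_le_exp hd hFb
  have hsnd : |exp (2 * τ) * ∫ s in Ioi τ, exp (-2 * s) * F s| ≤ B / d * exp (-d * τ) := by
    rw [← integral_const_mul]
    refine abs_integral_Ioi_le_of_abs_le_exp hd fun s hs => ?_
    have hker : exp (2 * τ) * exp (-2 * s) ≤ 1 := by
      rw [← exp_add, exp_le_one_iff]; linarith [mem_Ioi.1 hs]
    rw [← mul_assoc, abs_mul, abs_of_pos (by positivity)]
    exact (mul_le_of_le_one_left (abs_nonneg _) hker).trans (hFb s hs)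
  refine max_le ?_ ?_
  · calc |(decayingSolution F τ).1|
        ≤ |(∫ s in Ioi τ, F s) / 2| + |exp (2 * τ) * (∫ s in Ioi τ, exp (-2 * s) * F s) / 2| :=
          abs_sub _ _
      _ ≤ B / d * exp (-d * τ) := by rw [abs_div, abs_div, abs_two]; linarith
  · simpa only [decayingSolution, Real.norm_eq_abs, abs_neg] using hsnd

theorem decayingSolution_sub {t : ℝ} (hF : IntegrableOn F (Ioi t)) (hG : IntegrableOn G (Ioi t)) :
    decayingSolution F t - decayingSolution G t = decayingSolution (F - G) t := by
  have hsub := integral_sub (hF.exp_neg_mul_Ioi zero_le_two) (hG.exp_neg_mul_Ioi zero_le_two)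
  simp only [decayingSolution, Prod.mk_sub_mk, Pi.sub_apply, mul_sub, integral_sub hF hG, hsub]
  ext <;> ring

theorem tendsto_decayingSolution_atTop (hd : 0 < d)
    (hFb : ∀ s ∈ Ici 0, |F s| ≤ B * exp (-d * s)) :
    Tendsto (decayingSolution F) atTop (𝓝 0) := by
  have hexp : Tendsto (fun t => B / d * exp (-d * t)) atTop (𝓝 0) := by
    simpa using ((tendsto_exp_atBot.comp
      (tendsto_id.const_mul_atTop_of_neg (neg_neg_of_pos hd))).const_mul (B / d))
  refine squeeze_zero_norm' ?_ hexp
  filter_upwards [eventually_ge_atTop 0] with t ht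
  exact norm_decayingSolution_le hd fun s hs => hFb s (ht.trans (le_of_lt hs))

end DecayingSolution

theorem hasDerivAt_exp_neg_mul {f : ℝ → ℝ} {f' t : ℝ} (hf : HasDerivAt f f' t) :
    HasDerivAt (fun x => exp (-x) * f x) (exp (-t) * (f' - f t)) t := by
  have hexp : HasDerivAt (fun x => exp (-x)) (-exp (-t)) t := by
    simpa using (hasDerivAt_id t).neg.exp
  exact (hexp.mul hf).congr_deriv (by ring)

theorem exists_isFixedPt_of_dist_iterate_le {X : Type*} [MetricSpace X] [CompleteSpace X]
    [Nonempty X] {f : X → X} {K : ℝ} (hK : 0 ≤ K)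
    (hf : ∀ n x y, dist (f^[n] x) (f^[n] y) ≤ K ^ n / n.factorial * dist x y) :
    ∃ x, Function.IsFixedPt f x := by
  obtain ⟨n, hn⟩ := ((FloorSemiring.tendsto_pow_div_factorial_atTop K).eventually
    (gt_mem_nhds zero_lt_one)).exists
  have hcontr : ContractingWith ⟨K ^ n / n.factorial, by positivity⟩ f^[n] :=
    ⟨hn, LipschitzWith.of_dist_le_mul (hf n)⟩
  exact ⟨_, hcontr.isFixedPt_fixedPoint_iterate⟩

section Picard

open BoundedContinuousFunction

variable {p q : ℝ → ℝ} {c d : ℝ}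

theorem abs_sub_mul_add_mul_le {a b K : ℝ} (ha : |a| ≤ K) (hb : |b| ≤ K) (x : ℝ × ℝ) :
    |(b - a) * x.1 + a * x.2| ≤ 3 * K * ‖x‖ := by
  have hba : |b - a| ≤ 2 * K := (abs_sub b a).trans (by linarith)
  calc |(b - a) * x.1 + a * x.2| ≤ |b - a| * |x.1| + |a| * |x.2| := by
        simpa only [abs_mul] using abs_add_le ((b - a) * x.1) (a * x.2)
    _ ≤ 2 * K * ‖x‖ + K * ‖x‖ := by
        gcongr
        exacts [(abs_nonneg _).trans hba, norm_fst_le x, (abs_nonneg _).trans ha, norm_snd_le x]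
    _ = 3 * K * ‖x‖ := by ring

noncomputable def forcing (p q : ℝ → ℝ) (w : ℝ → ℝ × ℝ) (s : ℝ) : ℝ :=
  (q s - p s) * (1 + (w s).1) + p s * (w s).2

theorem continuous_forcing (hp : Continuous p) (hq : Continuous q) {w : ℝ → ℝ × ℝ}
    (hw : Continuous w) : Continuous (forcing p q w) := by
  unfold forcing; fun_prop

theorem abs_forcing_le (hpb : ∀ s ∈ Ici 0, |p s| ≤ c * exp (-d * s))
    (hqb : ∀ s ∈ Ici 0, |q s| ≤ c * exp (-d * s)) {w : ℝ → ℝ × ℝ} {N : ℝ}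
    (hw : ∀ s, ‖w s‖ ≤ N) : ∀ s ∈ Ici 0, |forcing p q w s| ≤ 3 * c * (1 + N) * exp (-d * s) := by
  intro s hs
  have hshift : ‖((1 + (w s).1, (w s).2) : ℝ × ℝ)‖ ≤ 1 + N := by
    have hsum : ((1 + (w s).1, (w s).2) : ℝ × ℝ) = (1, 0) + w s := by ext <;> simp
    rw [hsum]
    exact (norm_add_le _ _).trans (by simpa using hw s)
  calc |forcing p q w s| ≤ 3 * (c * exp (-d * s)) * ‖((1 + (w s).1, (w s).2) : ℝ × ℝ)‖ :=
        abs_sub_mul_add_mul_le (hpb s hs) (hqb s hs) (1 + (w s).1, (w s).2)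
    _ ≤ 3 * c * (1 + N) * exp (-d * s) := by
        have := (abs_nonneg _).trans (hpb s hs)
        nlinarith

theorem abs_forcing_sub_le (hpb : ∀ s ∈ Ici 0, |p s| ≤ c * exp (-d * s))
    (hqb : ∀ s ∈ Ici 0, |q s| ≤ c * exp (-d * s)) (w w' : ℝ → ℝ × ℝ) :
    ∀ s ∈ Ici 0, |forcing p q w s - forcing p q w' s| ≤ 3 * (c * exp (-d * s)) * ‖w s - w' s‖ := by
  intro s hs
  have hlin : forcing p q w s - forcing p q w' s
      = (q s - p s) * (w s - w' s).1 + p s * (w s - w' s).2 := by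
    simp only [forcing, Prod.fst_sub, Prod.snd_sub]; ring
  rw [hlin]
  exact abs_sub_mul_add_mul_le (hpb s hs) (hqb s hs) _

/-- Clamping at `0` keeps the iterates bounded on all of `ℝ`. -/
noncomputable def picardStep (p q : ℝ → ℝ) (w : ℝ → ℝ × ℝ) (t : ℝ) : ℝ × ℝ :=
  decayingSolution (forcing p q w) (max t 0)

theorem integrableOn_forcing (hp : Continuous p) (hq : Continuous q) (hd : 0 < d)
    (hpb : ∀ s ∈ Ici 0, |p s| ≤ c * exp (-d * s)) (hqb : ∀ s ∈ Ici 0, |q s| ≤ c * exp (-d * s))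
    (w : ℝ →ᵇ ℝ × ℝ) (a : ℝ) : IntegrableOn (forcing p q w) (Ioi a) :=
  (continuous_forcing hp hq w.continuous).integrableOn_Ioi_of_abs_le_exp hd
    (abs_forcing_le hpb hqb w.norm_coe_le_norm) a

theorem continuous_picardStep (hp : Continuous p) (hq : Continuous q) (hd : 0 < d)
    (hpb : ∀ s ∈ Ici 0, |p s| ≤ c * exp (-d * s)) (hqb : ∀ s ∈ Ici 0, |q s| ≤ c * exp (-d * s))
    (w : ℝ →ᵇ ℝ × ℝ) : Continuous (picardStep p q w) :=
  (continuous_decayingSolution (continuous_forcing hp hq w.continuous)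
    (integrableOn_forcing hp hq hd hpb hqb w)).comp (continuous_id.max continuous_const)

theorem norm_picardStep_le (hd : 0 < d)
    (hpb : ∀ s ∈ Ici 0, |p s| ≤ c * exp (-d * s)) (hqb : ∀ s ∈ Ici 0, |q s| ≤ c * exp (-d * s))
    (w : ℝ →ᵇ ℝ × ℝ) (t : ℝ) :
    ‖picardStep p q w t‖ ≤ 3 * c * (1 + ‖w‖) / d * exp (-d * max t 0) :=
  norm_decayingSolution_le hd fun s hs =>
    abs_forcing_le hpb hqb w.norm_coe_le_norm s ((le_max_right t 0).trans (le_of_lt hs))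

theorem norm_picardStep_sub_le (hp : Continuous p) (hq : Continuous q) (hd : 0 < d)
    (hpb : ∀ s ∈ Ici 0, |p s| ≤ c * exp (-d * s)) (hqb : ∀ s ∈ Ici 0, |q s| ≤ c * exp (-d * s))
    {w w' : ℝ →ᵇ ℝ × ℝ} {A a : ℝ} (ha : 0 ≤ a)
    (hww' : ∀ s ∈ Ici 0, ‖w s - w' s‖ ≤ A * exp (-a * s)) (t : ℝ) :
    ‖picardStep p q w t - picardStep p q w' t‖
      ≤ 3 * c * A / (d + a) * exp (-(d + a) * max t 0) := by
  rw [picardStep, picardStep, decayingSolution_sub (integrableOn_forcing hp hq hd hpb hqb w _)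
    (integrableOn_forcing hp hq hd hpb hqb w' _)]
  refine norm_decayingSolution_le (by positivity) fun s hs => ?_
  have hs0 : s ∈ Ici 0 := (le_max_right t 0).trans (le_of_lt hs)
  have hc : 0 ≤ c * exp (-d * s) := (abs_nonneg _).trans (hpb s hs0)
  calc |(forcing p q w - forcing p q w') s|
      ≤ 3 * (c * exp (-d * s)) * ‖w s - w' s‖ := abs_forcing_sub_le hpb hqb w w' s hs0
    _ ≤ 3 * (c * exp (-d * s)) * (A * exp (-a * s)) := by gcongr; exact hww' s hs0
    _ = 3 * c * A * exp (-(d + a) * s) := by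
        rw [neg_add, add_mul, exp_add]; ring

theorem exists_picardStep_eq_self (hp : Continuous p) (hq : Continuous q)
    (hd : 0 < d) (hc : 0 ≤ c) (hpb : ∀ s ∈ Ici 0, |p s| ≤ c * exp (-d * s))
    (hqb : ∀ s ∈ Ici 0, |q s| ≤ c * exp (-d * s)) :
    ∃ w : ℝ →ᵇ ℝ × ℝ, ∀ t, picardStep p q w t = w t := by
  let Φ : (ℝ →ᵇ ℝ × ℝ) → ℝ →ᵇ ℝ × ℝ := fun w =>
    ofNormedAddCommGroup (picardStep p q w) (continuous_picardStep hp hq hd hpb hqb w)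
      (3 * c * (1 + ‖w‖) / d) fun t => (norm_picardStep_le hd hpb hqb w t).trans <|
        mul_le_of_le_one_right (by positivity)
          (exp_le_one_iff.2 (by nlinarith [le_max_right t 0]))
  have hiter : ∀ (n : ℕ) (w w' : ℝ →ᵇ ℝ × ℝ) (t : ℝ), ‖(Φ^[n] w) t - (Φ^[n] w') t‖
      ≤ (3 * c / d) ^ n / n.factorial * dist w w' * exp (-(d * n) * max t 0) := by
    intro n
    induction n with
    | zero =>
      intro w w' t
      simpa [← dist_eq_norm] using w.dist_coe_le_dist t
    | succ n ih =>
      intro w w' t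
      rw [Function.iterate_succ_apply', Function.iterate_succ_apply']
      refine (norm_picardStep_sub_le hp hq hd hpb hqb (a := d * n) (by positivity)
        (fun s hs => (ih w w' s).trans_eq (by rw [max_eq_left hs])) t).trans_eq ?_
      rw [show -(d + d * n) * max t 0 = -(d * ↑(n + 1)) * max t 0 by push_cast; ring,
        Nat.factorial_succ, pow_succ]
      have := hd.ne'
      push_cast
      field_simp
      ring
  obtain ⟨w, hw⟩ := exists_isFixedPt_of_dist_iterate_le (f := Φ) (K := 3 * c / d) (by positivity)
    fun n w w' => (BoundedContinuousFunction.dist_le (by positivity)).2 fun t => by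
      rw [dist_eq_norm]
      refine (hiter n w w' t).trans (mul_le_of_le_one_right (by positivity) ?_)
      rw [exp_le_one_iff, neg_mul, neg_nonpos]
      exact mul_nonneg (by positivity) (le_max_right t 0)
  exact ⟨w, fun t => DFunLike.congr_fun hw t⟩

theorem exists_reducedSystem_solution_tendsto_zero (hp : Continuous p) (hq : Continuous q)
    (hd : 0 < d) (hc : 0 ≤ c) (hpb : ∀ s ∈ Ici 0, |p s| ≤ c * exp (-d * s))
    (hqb : ∀ s ∈ Ici 0, |q s| ≤ c * exp (-d * s)) :
    ∃ h g : ℝ → ℝ, (∀ t, HasDerivAt h (g t) t) ∧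
      (∀ t ∈ Ici 0, HasDerivAt g (2 * g t + ((q t - p t) * (1 + h t) + p t * g t)) t) ∧
      Tendsto h atTop (𝓝 0) ∧ Tendsto g atTop (𝓝 0) := by
  obtain ⟨w, hw⟩ := exists_picardStep_eq_self hp hq hd hc hpb hqb
  have hF := continuous_forcing hp hq w.continuous
  have hFi := integrableOn_forcing hp hq hd hpb hqb w
  have hw0 : ∀ t ∈ Ici 0, w t = decayingSolution (forcing p q w) t := fun t ht => by
    rw [← hw t, picardStep, max_eq_left ht]
  have hlim := tendsto_decayingSolution_atTop hd (abs_forcing_le hpb hqb w.norm_coe_le_norm)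
  refine ⟨fun t => (decayingSolution (forcing p q w) t).1,
    fun t => (decayingSolution (forcing p q w) t).2, hasDerivAt_decayingSolution_fst hF hFi,
    fun t ht => ?_, by simpa using hlim.fst_nhds, by simpa using hlim.snd_nhds⟩
  convert hasDerivAt_decayingSolution_snd hF hFi t using 2
  rw [forcing, hw0 t ht]

theorem exists_solution_tendsto_exp_neg (hp : Continuous p) (hq : Continuous q)
    (hd : 0 < d) (hc : 0 ≤ c) (hpb : ∀ s ∈ Ici 0, |p s| ≤ c * exp (-d * s))
    (hqb : ∀ s ∈ Ici 0, |q s| ≤ c * exp (-d * s)) :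
    ∃ u v : ℝ → ℝ, (∀ t, HasDerivAt u (v t) t) ∧
      (∀ t ∈ Ici 0, HasDerivAt v (p t * v t + (1 + q t) * u t) t) ∧
      Tendsto (fun t => exp t * u t) atTop (𝓝 1) ∧
      Tendsto (fun t => exp t * v t) atTop (𝓝 (-1)) := by
  obtain ⟨h, g, hh, hg, hh0, hg0⟩ := exists_reducedSystem_solution_tendsto_zero hp hq hd hc hpb hqb
  have hcancel : ∀ t x, exp t * (exp (-t) * x) = x := fun t x => by
    rw [exp_neg, mul_inv_cancel_left₀ (exp_pos t).ne']
  refine ⟨fun t => exp (-t) * (1 + h t), fun t => exp (-t) * (g t - 1 - h t),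
    fun t => (hasDerivAt_exp_neg_mul ((hh t).const_add 1)).congr_deriv (by ring),
    fun t ht => (hasDerivAt_exp_neg_mul (((hg t ht).sub_const 1).fun_sub (hh t))).congr_deriv
      (by ring), ?_, ?_⟩
  · simpa only [hcancel, add_zero] using hh0.const_add 1
  · simpa only [hcancel, zero_sub, sub_zero] using (hg0.sub_const 1).sub hh0

end Picard

section Positivity

variable {u v v' : ℝ → ℝ}

theorem pos_of_hasDerivAt_nonpos_of_eventually_pos {b : ℝ}
    (hu : ∀ t ∈ Ici b, HasDerivAt u (v t) t) (hv : ∀ t ∈ Ioi b, v t ≤ 0)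
    (hev : ∀ᶠ t in atTop, 0 < u t) : 0 < u b := by
  have hanti : AntitoneOn u (Ici b) :=
    antitoneOn_of_hasDerivWithinAt_nonpos (convex_Ici b)
      (fun t ht => (hu t ht).continuousAt.continuousWithinAt)
      (fun t ht => (hu t (interior_subset ht)).hasDerivWithinAt)
      (fun t ht => hv t (by rwa [interior_Ici] at ht))
  obtain ⟨t, hut, hbt⟩ := (hev.and (eventually_ge_atTop b)).exists
  exact hut.trans_le (hanti (mem_Ici.2 le_rfl) hbt hbt)

theorem pos_and_neg_of_eventually_of_hasDerivAt {a : ℝ} (hu : ∀ t ∈ Ici a, HasDerivAt u (v t) t)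
    (hv : ∀ t ∈ Ici a, HasDerivAt v (v' t) t) (hv' : ∀ t ∈ Ici a, v t = 0 → 0 < u t → 0 < v' t)
    (hev : ∀ᶠ t in atTop, 0 < u t ∧ v t < 0) : ∀ t ∈ Ici a, 0 < u t ∧ v t < 0 := by
  have hu_pos : ∀ b ∈ Ici a, (∀ t ∈ Ioi b, v t ≤ 0) → 0 < u b := fun b hb hvb =>
    pos_of_hasDerivAt_nonpos_of_eventually_pos (fun t ht => hu t (mem_Ici.2 (hb.trans ht)))
      hvb (hev.mono fun _ => And.left)
  suffices hneg : ∀ t ∈ Ici a, v t < 0 from fun t ht =>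
    ⟨hu_pos t ht fun x hx => (hneg x (mem_Ici.2 (ht.trans (le_of_lt hx)))).le, hneg t ht⟩
  by_contra! ⟨t₀, ht₀, hvt₀⟩
  -- the last point where `v` is nonnegative
  set S := Ici a ∩ v ⁻¹' Ici 0
  obtain ⟨T, hT⟩ := eventually_atTop.1 (hev.mono fun _ => And.right)
  have hbdd : BddAbove S := ⟨T, fun x hx => not_lt.1 fun hTx => (hT x hTx.le).not_ge hx.2⟩
  have hclosed : IsClosed S := ContinuousOn.preimage_isClosed_of_isClosed
    (fun x hx => (hv x hx).continuousAt.continuousWithinAt) isClosed_Ici isClosed_Ici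
  have hsS : sSup S ∈ S := hclosed.csSup_mem ⟨t₀, ht₀, hvt₀⟩ hbdd
  set s := sSup S
  have hright : ∀ x ∈ Ioi s, v x < 0 := fun x hx =>
    not_le.1 fun hvx => (le_csSup hbdd ⟨mem_Ici.2 (hsS.1.trans (le_of_lt hx)), hvx⟩).not_gt hx
  have hvs : v s = 0 := le_antisymm
    (le_of_tendsto ((hv s hsS.1).continuousAt.tendsto.mono_left (nhdsWithin_le_nhds (s := Ioi s)))
      (eventually_nhdsWithin_of_forall fun x hx => (hright x hx).le)) hsS.2
  have hv's : v' s ≤ 0 := by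
    refine le_of_tendsto ((hasDerivWithinAt_iff_tendsto_slope' self_notMem_Ioi).1
      (hv s hsS.1).hasDerivWithinAt) (eventually_nhdsWithin_of_forall fun x hx => ?_)
    rw [slope_def_field, hvs, sub_zero]
    exact div_nonpos_of_nonpos_of_nonneg (hright x hx).le (sub_nonneg.2 (le_of_lt hx))
  exact hv's.not_gt (hv' s hsS.1 hvs (hu_pos s hsS.1 fun x hx => (hright x hx).le))

end Positivity

theorem ContinuousOn.exists_forall_le_of_tendsto {φ : ℝ → ℝ} {a l : ℝ}
    (hφ : ContinuousOn φ (Ici a)) (hlim : Tendsto φ atTop (𝓝 l)) :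
    ∃ M, ∀ t ∈ Ici a, φ t ≤ M := by
  obtain ⟨T, hT⟩ := eventually_atTop.1 (hlim.eventually (gt_mem_nhds (lt_add_one l)))
  obtain ⟨M, hM⟩ := isCompact_Icc.bddAbove_image (hφ.mono (Icc_subset_Ici_self : Icc a T ⊆ Ici a))
  refine ⟨max M (l + 1), fun t ht => ?_⟩
  rcases le_total t T with htT | hTt
  · exact le_max_of_le_left (hM ⟨t, ⟨ht, htT⟩, rfl⟩)
  · exact le_max_of_le_right (hT t hTt).le

theorem ContinuousOn.eventually_forall_inv_le_and_le {φ : ℝ → ℝ} {a l : ℝ}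
    (hφ : ContinuousOn φ (Ici a)) (hpos : ∀ t ∈ Ici a, 0 < φ t) (hl : l ≠ 0)
    (hlim : Tendsto φ atTop (𝓝 l)) :
    ∀ᶠ C in atTop, ∀ t ∈ Ici a, C⁻¹ ≤ φ t ∧ φ t ≤ C := by
  obtain ⟨M₁, hM₁⟩ := hφ.exists_forall_le_of_tendsto hlim
  obtain ⟨M₂, hM₂⟩ :=
    (hφ.inv₀ fun t ht => (hpos t ht).ne').exists_forall_le_of_tendsto (hlim.inv₀ hl)
  filter_upwards [eventually_ge_atTop M₁, eventually_ge_atTop M₂, eventually_gt_atTop 0]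
    with C h₁ h₂ h₀ t ht
  exact ⟨(inv_le_comm₀ h₀ (hpos t ht)).2 ((hM₂ t ht).trans h₂), (hM₁ t ht).trans h₁⟩

theorem exists_exp_neg_bounds_of_hasDerivAt {P Q u v : ℝ → ℝ} {a : ℝ}
    (hu : ∀ t ∈ Ici a, HasDerivAt u (v t) t)
    (hv : ∀ t ∈ Ici a, HasDerivAt v (P t * v t + (1 + Q t) * u t) t)
    (hQ1 : ∀ t ∈ Ici a, 0 < 1 + Q t)
    (hu_lim : Tendsto (fun t => exp t * u t) atTop (𝓝 1))
    (hv_lim : Tendsto (fun t => exp t * v t) atTop (𝓝 (-1))) :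
    ∃ C, 0 < C ∧ ∀ t ∈ Ici a,
      C⁻¹ * exp (-t) ≤ u t ∧ u t ≤ C * exp (-t) ∧
      C⁻¹ * exp (-t) ≤ -v t ∧ -v t ≤ C * exp (-t) := by
  have hev : ∀ᶠ t in atTop, 0 < u t ∧ v t < 0 :=
    ((hu_lim.eventually (lt_mem_nhds one_pos)).and
      (hv_lim.eventually (gt_mem_nhds (neg_one_lt_zero)))).mono fun t ht =>
      ⟨pos_of_mul_pos_right ht.1 (exp_pos t).le, neg_of_mul_neg_right ht.2 (exp_pos t).le⟩
  have hsign := pos_and_neg_of_eventually_of_hasDerivAt hu hv (fun t ht hvt hut => by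
    rw [hvt, mul_zero, zero_add]; exact mul_pos (hQ1 t ht) hut) hev
  have hcont : ∀ {f f' : ℝ → ℝ}, (∀ t ∈ Ici a, HasDerivAt f (f' t) t) →
      ContinuousOn (fun t => exp t * f t) (Ici a) := fun hf =>
    continuous_exp.continuousOn.mul fun t ht => (hf t ht).continuousAt.continuousWithinAt
  have hu_bounds := (hcont hu).eventually_forall_inv_le_and_le
    (fun t ht => mul_pos (exp_pos t) (hsign t ht).1) one_ne_zero hu_lim
  have hv_bounds := (hcont (fun t ht => (hv t ht).neg)).eventually_forall_inv_le_and_le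
    (fun t ht => mul_pos (exp_pos t) (neg_pos.2 (hsign t ht).2)) one_ne_zero
    (by simpa using hv_lim.neg)
  obtain ⟨C, ⟨hCu, hCv⟩, hC⟩ := ((hu_bounds.and hv_bounds).and (eventually_gt_atTop 0)).exists
  have hexp : ∀ t x, C⁻¹ ≤ exp t * x ∧ exp t * x ≤ C →
      C⁻¹ * exp (-t) ≤ x ∧ x ≤ C * exp (-t) := fun t x ⟨h₁, h₂⟩ => by
    rw [exp_neg, mul_inv_le_iff₀ (exp_pos t), le_mul_inv_iff₀ (exp_pos t)]
    exact ⟨by linarith, by linarith⟩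
  exact ⟨C, hC, fun t ht => ⟨hexp t _ (hCu t ht) |>.1, hexp t _ (hCu t ht) |>.2,
    hexp t _ (hCv t ht) |>.1, hexp t _ (hCv t ht) |>.2⟩⟩

/-- Existence of an exponentially decaying fundamental solution of `u'' = P u' + (1+Q) u`. -/
theorem ode_decaying_fundamental_solution (P Q : ℝ → ℝ) (d C₀ : ℝ)
    (hP : ContinuousOn P (Ici 0)) (hQ : ContinuousOn Q (Ici 0))
    (hQ1 : ∀ t ∈ Ici (0:ℝ), 0 < 1 + Q t)
    (hd : 0 < d) (hC₀ : 0 < C₀)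
    (hPb : ∀ t ∈ Ici (0:ℝ), |P t| ≤ C₀ * exp (-d * t))
    (hQb : ∀ t ∈ Ici (0:ℝ), |Q t| ≤ C₀ * exp (-d * t)) :
    ∃ (u₂ u₂' : ℝ → ℝ) (C : ℝ), 0 < C ∧
      (∀ t ∈ Ici (0:ℝ), HasDerivWithinAt u₂ (u₂' t) (Ici 0) t) ∧
      (∀ t ∈ Ici (0:ℝ), HasDerivWithinAt u₂' (P t * u₂' t + (1 + Q t) * u₂ t) (Ici 0) t) ∧
      (∀ t ∈ Ici (0:ℝ),
        C⁻¹ * exp (-t) ≤ u₂ t ∧ u₂ t ≤ C * exp (-t) ∧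
        C⁻¹ * exp (-t) ≤ -u₂' t ∧ -u₂' t ≤ C * exp (-t)) := by
  have hmax : ∀ t ∈ Ici (0:ℝ), max t 0 = t := fun t ht => max_eq_left ht
  obtain ⟨u, v, hu, hv, hu_lim, hv_lim⟩ := exists_solution_tendsto_exp_neg
    hP.continuous_comp_max hQ.continuous_comp_max hd hC₀.le
    (fun s hs => by simpa only [hmax s hs] using hPb s hs)
    (fun s hs => by simpa only [hmax s hs] using hQb s hs)
  have hv' : ∀ t ∈ Ici (0:ℝ), HasDerivAt v (P t * v t + (1 + Q t) * u t) t := fun t ht => by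
    simpa only [hmax t ht] using hv t ht
  obtain ⟨C, hC, hbounds⟩ :=
    exists_exp_neg_bounds_of_hasDerivAt (fun t _ => hu t) hv' hQ1 hu_lim hv_lim
  exact ⟨u, v, C, hC, fun t _ => (hu t).hasDerivWithinAt,
    fun t ht => (hv' t ht).hasDerivWithinAt, hbounds⟩
end

section
/- Let u be a positive solution on [0,∞) of u'' = P u' + (1+Q) u with |P(t)|, |Q(t)| ≤ C₀ e^{-dt} (C₀, d > 0), u > 0, u' > 0. Setting w = u + u', the function w satisfies the differential inequality (1 - |P| - |Q|) w ≤ w' ≤ (1 + |P| + |Q|) w, and consequently there is a constant C₁ > 0 with C₁⁻¹ e^t ≤ u(t) + u'(t) ≤ C₁ e^t for all t ≥ 0. -/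
open Set Real

/-! For `w = u + u'` one has `w' - w = P u' + Q u`, so `|w' - w| ≤ (|P| + |Q|) w ≤ 2 C₀ e^{-dt} w`.
Hence the logarithmic derivative of `w e^{-t}` is bounded by the integrable function
`2 C₀ e^{-dt}`, and `log (w(t) e^{-t})` stays within `2 C₀ / d` of its value at `0`. -/

lemma abs_mul_add_mul_le {p q a b : ℝ} (ha : 0 ≤ a) (hb : 0 ≤ b) :
    |p * b + q * a| ≤ (|p| + |q|) * (a + b) := by
  calc |p * b + q * a| ≤ |p| * b + |q| * a := by
        simpa only [abs_mul, abs_of_nonneg ha, abs_of_nonneg hb] using abs_add_le (p * b) (q * a)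
    _ ≤ (|p| + |q|) * (a + b) := by nlinarith [abs_nonneg p, abs_nonneg q]

lemma sum_perturbation_bounds {p q a b : ℝ} (ha : 0 ≤ a) (hb : 0 ≤ b) :
    (1 - |p| - |q|) * (a + b) ≤ b + (p * b + (1 + q) * a) ∧
      b + (p * b + (1 + q) * a) ≤ (1 + |p| + |q|) * (a + b) := by
  obtain ⟨hlow, hup⟩ := abs_le.1 (abs_mul_add_mul_le (p := p) (q := q) ha hb)
  constructor <;> linarith

lemma abs_sub_le_sub_of_abs_deriv_le {D : Set ℝ} (hD : Convex ℝ D) {F G F' G' : ℝ → ℝ}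
    (hF : ∀ x ∈ D, HasDerivWithinAt F (F' x) D x) (hG : ∀ x ∈ D, HasDerivWithinAt G (G' x) D x)
    (hFG : ∀ x ∈ D, |F' x| ≤ G' x) {a b : ℝ} (ha : a ∈ D) (hb : b ∈ D) (hab : a ≤ b) :
    |F b - F a| ≤ G b - G a := by
  have hcont : ContinuousOn F D := fun x hx => (hF x hx).continuousWithinAt
  have hcont' : ContinuousOn G D := fun x hx => (hG x hx).continuousWithinAt
  have hint {H H' : ℝ → ℝ} (hH : ∀ x ∈ D, HasDerivWithinAt H (H' x) D x) :
      ∀ x ∈ interior D, HasDerivWithinAt H (H' x) (interior D) x :=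
    fun x hx => (hH x (interior_subset hx)).mono interior_subset
  have hsub : MonotoneOn (G - F) D :=
    monotoneOn_of_hasDerivWithinAt_nonneg hD (hcont'.sub hcont)
      (hint fun x hx => (hG x hx).sub (hF x hx))
      fun x hx => sub_nonneg.2 ((le_abs_self _).trans (hFG x (interior_subset hx)))
  have hadd : MonotoneOn (G + F) D :=
    monotoneOn_of_hasDerivWithinAt_nonneg hD (hcont'.add hcont)
      (hint fun x hx => (hG x hx).add (hF x hx))
      fun x hx => by linarith [neg_abs_le (F' x), hFG x (interior_subset hx)]
  have h₁ := hsub ha hb hab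
  have h₂ := hadd ha hb hab
  simp only [Pi.sub_apply, Pi.add_apply] at h₁ h₂
  exact abs_le.2 ⟨by linarith, by linarith⟩

lemma abs_log_mul_exp_neg_sub_le {D : Set ℝ} (hD : Convex ℝ D) {w w' g G : ℝ → ℝ}
    (hw : ∀ x ∈ D, 0 < w x) (hw' : ∀ x ∈ D, HasDerivWithinAt w (w' x) D x)
    (hG : ∀ x ∈ D, HasDerivWithinAt G (g x) D x) (hwg : ∀ x ∈ D, |w' x - w x| ≤ g x * w x)
    {a b : ℝ} (ha : a ∈ D) (hb : b ∈ D) (hab : a ≤ b) :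
    |(log (w b) - b) - (log (w a) - a)| ≤ G b - G a := by
  refine abs_sub_le_sub_of_abs_deriv_le hD (F := fun x => log (w x) - x)
    (fun x hx => ((hw' x hx).log (hw x hx).ne').sub (hasDerivWithinAt_id x D)) hG
    (fun x hx => ?_) ha hb hab
  have hwx := hw x hx
  rw [show w' x / w x - 1 = (w' x - w x) / w x by field_simp, abs_div, abs_of_pos hwx,
    div_le_iff₀ hwx]
  exact hwg x hx

lemma hasDerivAt_neg_div_mul_exp_neg_mul (c : ℝ) {d : ℝ} (hd : d ≠ 0) (x : ℝ) :
    HasDerivAt (fun t => -(c / d) * exp (-d * t)) (c * exp (-d * x)) x :=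
  ((((hasDerivAt_id' x).const_mul (-d)).exp).const_mul (-(c / d))).congr_deriv (by field_simp)

lemma bounds_of_abs_log_sub_le {y y₀ t K : ℝ} (hy : 0 < y) (hy₀ : 0 < y₀)
    (h : |log y - t - log y₀| ≤ K) :
    (max y₀ y₀⁻¹ * exp K)⁻¹ * exp t ≤ y ∧ y ≤ max y₀ y₀⁻¹ * exp K * exp t := by
  obtain ⟨hlow, hup⟩ := abs_le.1 h
  constructor
  · calc (max y₀ y₀⁻¹ * exp K)⁻¹ * exp t ≤ (y₀⁻¹ * exp K)⁻¹ * exp t := by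
          gcongr; exact le_max_right _ _
      _ = exp (log y₀ - K + t) := by
          rw [exp_add, exp_sub, exp_log hy₀, mul_inv, inv_inv, div_eq_mul_inv]
      _ ≤ y := by rw [← exp_log hy]; exact exp_le_exp.2 (by linarith)
  · calc y ≤ exp (log y₀ + K + t) := by rw [← exp_log hy]; exact exp_le_exp.2 (by linarith)
      _ = y₀ * exp K * exp t := by rw [exp_add, exp_add, exp_log hy₀]
      _ ≤ max y₀ y₀⁻¹ * exp K * exp t := by gcongr; exact le_max_left _ _

theorem ode_sum_estimate_general (P Q u u' : ℝ → ℝ) (d C₀ : ℝ)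
    (hd : 0 < d) (hC₀ : 0 < C₀)
    (hPb : ∀ t ∈ Ici (0:ℝ), |P t| ≤ C₀ * exp (-d * t))
    (hQb : ∀ t ∈ Ici (0:ℝ), |Q t| ≤ C₀ * exp (-d * t))
    (hu : ∀ t ∈ Ici (0:ℝ), HasDerivWithinAt u (u' t) (Ici 0) t)
    (hu' : ∀ t ∈ Ici (0:ℝ), HasDerivWithinAt u' (P t * u' t + (1 + Q t) * u t) (Ici 0) t)
    (hupos : ∀ t ∈ Ici (0:ℝ), 0 < u t) (hu'pos : ∀ t ∈ Ici (0:ℝ), 0 < u' t) :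
    (∀ t ∈ Ici (0:ℝ),
      (1 - |P t| - |Q t|) * (u t + u' t) ≤ u' t + (P t * u' t + (1 + Q t) * u t) ∧
      u' t + (P t * u' t + (1 + Q t) * u t) ≤ (1 + |P t| + |Q t|) * (u t + u' t)) ∧
    ∃ C₁ : ℝ, 0 < C₁ ∧ ∀ t ∈ Ici (0:ℝ),
      C₁⁻¹ * exp t ≤ u t + u' t ∧ u t + u' t ≤ C₁ * exp t := by
  have hw : ∀ t ∈ Ici (0:ℝ), 0 < u t + u' t := fun t ht => add_pos (hupos t ht) (hu'pos t ht)
  have h0 : (0:ℝ) ∈ Ici 0 := self_mem_Ici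
  refine ⟨fun t ht => sum_perturbation_bounds (hupos t ht).le (hu'pos t ht).le,
    max (u 0 + u' 0) (u 0 + u' 0)⁻¹ * exp (2 * C₀ / d),
    mul_pos (lt_max_of_lt_left (hw 0 h0)) (exp_pos _), fun t ht => ?_⟩
  have hwg : ∀ s ∈ Ici (0:ℝ), |(u' s + (P s * u' s + (1 + Q s) * u s)) - (u s + u' s)| ≤
      2 * C₀ * exp (-d * s) * (u s + u' s) := fun s hs => by
    calc _ = |P s * u' s + Q s * u s| := by congr 1; ring
      _ ≤ (|P s| + |Q s|) * (u s + u' s) := abs_mul_add_mul_le (hupos s hs).le (hu'pos s hs).le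
      _ ≤ 2 * C₀ * exp (-d * s) * (u s + u' s) :=
        mul_le_mul_of_nonneg_right (by linarith [hPb s hs, hQb s hs]) (hw s hs).le
  have hlog := abs_log_mul_exp_neg_sub_le (convex_Ici 0) hw (fun s hs => (hu s hs).add (hu' s hs))
    (fun s _ => (hasDerivAt_neg_div_mul_exp_neg_mul (2 * C₀) hd.ne' s).hasDerivWithinAt)
    hwg h0 ht ht
  rw [sub_zero] at hlog
  refine bounds_of_abs_log_sub_le (hw t ht) (hw 0 h0) (hlog.trans ?_)
  have : 0 < 2 * C₀ / d * exp (-d * t) := by positivity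
  simp only [mul_zero, exp_zero]
  linarith

/-- For a positive increasing solution of `u'' = P u' + (1+Q) u` with exponentially decaying
`P, Q`, the function `w = u + u'` satisfies `(1-|P|-|Q|) w ≤ w' ≤ (1+|P|+|Q|) w`, and hence
`C₁⁻¹ e^t ≤ u + u' ≤ C₁ e^t`. -/
theorem ode_sum_estimate (P Q u u' : ℝ → ℝ) (d C₀ : ℝ)
    (hP : ContinuousOn P (Ici 0)) (hQ : ContinuousOn Q (Ici 0))
    (hd : 0 < d) (hC₀ : 0 < C₀)
    (hPb : ∀ t ∈ Ici (0:ℝ), |P t| ≤ C₀ * exp (-d * t))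
    (hQb : ∀ t ∈ Ici (0:ℝ), |Q t| ≤ C₀ * exp (-d * t))
    (hu : ∀ t ∈ Ici (0:ℝ), HasDerivWithinAt u (u' t) (Ici 0) t)
    (hu' : ∀ t ∈ Ici (0:ℝ), HasDerivWithinAt u' (P t * u' t + (1 + Q t) * u t) (Ici 0) t)
    (hupos : ∀ t ∈ Ici (0:ℝ), 0 < u t) (hu'pos : ∀ t ∈ Ici (0:ℝ), 0 < u' t) :
    (∀ t ∈ Ici (0:ℝ),
      (1 - |P t| - |Q t|) * (u t + u' t) ≤ u' t + (P t * u' t + (1 + Q t) * u t) ∧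
      u' t + (P t * u' t + (1 + Q t) * u t) ≤ (1 + |P t| + |Q t|) * (u t + u' t)) ∧
    ∃ C₁ : ℝ, 0 < C₁ ∧ ∀ t ∈ Ici (0:ℝ),
      C₁⁻¹ * exp t ≤ u t + u' t ∧ u t + u' t ≤ C₁ * exp t :=
  ode_sum_estimate_general P Q u u' d C₀ hd hC₀ hPb hQb hu hu' hupos hu'pos
end

section
/- Let f : [0,∞) → ℝ be continuous with |f(t)| ≤ C₀ e^{-dt} for some d > 1, and let u₁, u₂ be solutions of the homogeneous equation u'' = P u' + (1+Q)u with C⁻¹e^{±t} ≤ u₁, u₂ ≤ Ce^{±t} respectively and Wronskian bounded away from zero: u₁u₂' − u₂u₁' ≤ −2C⁻². Then any solution u of u'' = P u' + (1+Q)u + f satisfies |u(t) − c₁ u₁(t) − c₂ u₂(t)| ≤ C' e^{-dt} for some constants c₁, c₂ and C' > 0. -/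
/-!
Write `u = a u₁ - b u₂` by Cramer's rule, with `a = W(u, u₂) / W(u₁, u₂)` and
`b = W(u, u₁) / W(u₁, u₂)`. Every Wronskian of two solutions satisfies `w' = P w` up to the forcing
term, so `a' = -u₂ f / W = O(e^{-(d+1)t})` and `b' = -u₁ f / W = O(e^{-(d-1)t})`. As `d > 1` both
rates are positive, hence `a → c₁` and `b → c₂` at these rates, and
`(a - c₁) u₁ - (b - c₂) u₂ = O(e^{-dt})`.
-/

open Set Real

theorem exists_forall_mem_Icc_of_monotoneOn_of_antitoneOn {ι α : Type*} [LinearOrder ι]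
    [ConditionallyCompleteLattice α] {f g : ι → α} {a : ι} (hf : MonotoneOn f (Ici a))
    (hg : AntitoneOn g (Ici a)) (hfg : ∀ t ∈ Ici a, f t ≤ g t) :
    ∃ c, ∀ t ∈ Ici a, f t ≤ c ∧ c ≤ g t := by
  have hbound : ∀ t ∈ Ici a, g t ∈ upperBounds (f '' Ici a) := by
    rintro t ht _ ⟨s, hs, rfl⟩
    rcases le_total s t with hst | hts
    · exact (hf hs ht hst).trans (hfg t ht)
    · exact (hfg s hs).trans (hg ht hs hts)
  refine ⟨sSup (f '' Ici a), fun t ht => ⟨le_csSup ⟨g t, hbound t ht⟩ (mem_image_of_mem f ht),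
    csSup_le ⟨f t, mem_image_of_mem f ht⟩ (hbound t ht)⟩⟩

theorem monotoneOn_Ici_of_hasDerivWithinAt_nonneg {φ φ' : ℝ → ℝ} {a : ℝ}
    (hφ : ∀ t ∈ Ici a, HasDerivWithinAt φ (φ' t) (Ici a) t) (hφ' : ∀ t ∈ Ici a, 0 ≤ φ' t) :
    MonotoneOn φ (Ici a) :=
  monotoneOn_of_hasDerivWithinAt_nonneg (convex_Ici a)
    (fun t ht => (hφ t ht).continuousWithinAt)
    (fun t ht => (hφ t (interior_subset ht)).mono interior_subset)
    (fun t ht => hφ' t (interior_subset ht))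

theorem abs_le_of_inv_mul_le_of_le_mul {x C E : ℝ} (hC : 0 < C) (hE : 0 < E)
    (h : C⁻¹ * E ≤ x ∧ x ≤ C * E) : |x| ≤ C * E :=
  abs_le.2 ⟨by linarith [h.1, show 0 < C⁻¹ * E + C * E by positivity], h.2⟩

theorem abs_mul_le_of_le_exp {x y A B α β : ℝ} (hx : |x| ≤ A * exp α) (hy : |y| ≤ B * exp β) :
    |x * y| ≤ A * B * exp (α + β) := by
  calc |x * y| = |x| * |y| := abs_mul x y
    _ ≤ A * exp α * (B * exp β) := mul_le_mul hx hy (abs_nonneg _) ((abs_nonneg _).trans hx)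
    _ = A * B * exp (α + β) := by rw [exp_add]; ring

theorem hasDerivAt_div_mul_exp_neg_mul (K : ℝ) {ε : ℝ} (hε : ε ≠ 0) (t : ℝ) :
    HasDerivAt (fun x => K / ε * exp (-ε * x)) (-(K * exp (-ε * t))) t :=
  ((((hasDerivAt_id' t).const_mul (-ε)).exp).const_mul (K / ε)).congr_deriv (by field_simp)

/-- `g - K / ε * exp (-ε t)` increases and `g + K / ε * exp (-ε t)` decreases; `c` lies between. -/
theorem exists_abs_sub_le_of_abs_deriv_le_exp {g g' : ℝ → ℝ} {K ε : ℝ} (hε : 0 < ε)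
    (hg : ∀ t ∈ Ici (0:ℝ), HasDerivWithinAt g (g' t) (Ici 0) t)
    (hg' : ∀ t ∈ Ici (0:ℝ), |g' t| ≤ K * exp (-ε * t)) :
    ∃ c, ∀ t ∈ Ici (0:ℝ), |g t - c| ≤ K / ε * exp (-ε * t) := by
  set h : ℝ → ℝ := fun t => K / ε * exp (-ε * t)
  have hK : 0 ≤ K := by simpa using (abs_nonneg _).trans (hg' 0 self_mem_Ici)
  have hh : ∀ t, HasDerivWithinAt h (-(K * exp (-ε * t))) (Ici 0) t := fun t =>
    (hasDerivAt_div_mul_exp_neg_mul K hε.ne' t).hasDerivWithinAt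
  have hlow : MonotoneOn (fun t => g t - h t) (Ici 0) :=
    monotoneOn_Ici_of_hasDerivWithinAt_nonneg (fun t ht => (hg t ht).sub (hh t))
      (fun t ht => by linarith [neg_abs_le (g' t), hg' t ht])
  have hupp : MonotoneOn (fun t => -g t - h t) (Ici 0) :=
    monotoneOn_Ici_of_hasDerivWithinAt_nonneg (fun t ht => (hg t ht).neg.sub (hh t))
      (fun t ht => by linarith [le_abs_self (g' t), hg' t ht])
  obtain ⟨c, hc⟩ := exists_forall_mem_Icc_of_monotoneOn_of_antitoneOn hlow hupp.neg
    (fun t _ => show g t - h t ≤ -(-g t - h t) by linarith [show 0 ≤ h t by positivity])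
  refine ⟨c, fun t ht => abs_le.mpr ⟨?_, ?_⟩⟩
  · linarith [show c ≤ -(-g t - h t) from (hc t ht).2]
  · linarith [(hc t ht).1]

theorem HasDerivWithinAt.div_of_deriv_eq_mul_add {N D : ℝ → ℝ} {s : Set ℝ} {t p r : ℝ}
    (hN : HasDerivWithinAt N (p * N t + r) s t) (hD : HasDerivWithinAt D (p * D t) s t)
    (hD₀ : D t ≠ 0) : HasDerivWithinAt (fun x => N x / D x) (r / D t) s t :=
  (hN.div hD hD₀).congr_deriv (by field_simp; ring)

def wronskian (u u' v v' : ℝ → ℝ) (t : ℝ) : ℝ := u t * v' t - v t * u' t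

theorem eq_wronskian_div_mul_sub (u u' u₁ u₁' u₂ u₂' : ℝ → ℝ) {t : ℝ}
    (hW : wronskian u₁ u₁' u₂ u₂' t ≠ 0) :
    u t = wronskian u u' u₂ u₂' t / wronskian u₁ u₁' u₂ u₂' t * u₁ t -
      wronskian u u' u₁ u₁' t / wronskian u₁ u₁' u₂ u₂' t * u₂ t := by
  field_simp
  simp only [wronskian]
  ring

section SecondOrderLinear

variable {p q f u u' v v' u₁ u₁' u₂ u₂' : ℝ → ℝ}

theorem hasDerivWithinAt_wronskian {s : Set ℝ} {t F G : ℝ} (hu : HasDerivWithinAt u (u' t) s t)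
    (hu' : HasDerivWithinAt u' (p t * u' t + q t * u t + F) s t)
    (hv : HasDerivWithinAt v (v' t) s t)
    (hv' : HasDerivWithinAt v' (p t * v' t + q t * v t + G) s t) :
    HasDerivWithinAt (wronskian u u' v v') (p t * wronskian u u' v v' t + (u t * G - v t * F))
      s t :=
  ((hu.mul hv').sub (hv.mul hu')).congr_deriv (by simp only [wronskian]; ring)

theorem hasDerivWithinAt_wronskian_div_wronskian {s : Set ℝ} {t : ℝ}
    (hu : HasDerivWithinAt u (u' t) s t)
    (hu' : HasDerivWithinAt u' (p t * u' t + q t * u t + f t) s t)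
    (hv : HasDerivWithinAt v (v' t) s t)
    (hv' : HasDerivWithinAt v' (p t * v' t + q t * v t) s t)
    (hu₁ : HasDerivWithinAt u₁ (u₁' t) s t)
    (hu₁' : HasDerivWithinAt u₁' (p t * u₁' t + q t * u₁ t) s t)
    (hu₂ : HasDerivWithinAt u₂ (u₂' t) s t)
    (hu₂' : HasDerivWithinAt u₂' (p t * u₂' t + q t * u₂ t) s t)
    (hW : wronskian u₁ u₁' u₂ u₂' t ≠ 0) :
    HasDerivWithinAt (fun x => wronskian u u' v v' x / wronskian u₁ u₁' u₂ u₂' x)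
      (-(v t * f t) / wronskian u₁ u₁' u₂ u₂' t) s t := by
  have hN := hasDerivWithinAt_wronskian hu hu' hv (hv'.congr_deriv (add_zero _).symm)
  have hD := hasDerivWithinAt_wronskian hu₁ (hu₁'.congr_deriv (add_zero _).symm)
    hu₂ (hu₂'.congr_deriv (add_zero _).symm)
  exact (hN.congr_deriv (by ring)).div_of_deriv_eq_mul_add (hD.congr_deriv (by ring)) hW

theorem exists_abs_wronskian_div_sub_le {C₀ C m d σ : ℝ} (hm : 0 < m) (hσ : σ < d)
    (hu : ∀ t ∈ Ici (0:ℝ), HasDerivWithinAt u (u' t) (Ici 0) t)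
    (hu' : ∀ t ∈ Ici (0:ℝ), HasDerivWithinAt u' (p t * u' t + q t * u t + f t) (Ici 0) t)
    (hv : ∀ t ∈ Ici (0:ℝ), HasDerivWithinAt v (v' t) (Ici 0) t)
    (hv' : ∀ t ∈ Ici (0:ℝ), HasDerivWithinAt v' (p t * v' t + q t * v t) (Ici 0) t)
    (hu₁ : ∀ t ∈ Ici (0:ℝ), HasDerivWithinAt u₁ (u₁' t) (Ici 0) t)
    (hu₁' : ∀ t ∈ Ici (0:ℝ), HasDerivWithinAt u₁' (p t * u₁' t + q t * u₁ t) (Ici 0) t)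
    (hu₂ : ∀ t ∈ Ici (0:ℝ), HasDerivWithinAt u₂ (u₂' t) (Ici 0) t)
    (hu₂' : ∀ t ∈ Ici (0:ℝ), HasDerivWithinAt u₂' (p t * u₂' t + q t * u₂ t) (Ici 0) t)
    (hfb : ∀ t ∈ Ici (0:ℝ), |f t| ≤ C₀ * exp (-d * t))
    (hvb : ∀ t ∈ Ici (0:ℝ), |v t| ≤ C * exp (σ * t))
    (hW : ∀ t ∈ Ici (0:ℝ), m ≤ |wronskian u₁ u₁' u₂ u₂' t|) :
    ∃ c, ∀ t ∈ Ici (0:ℝ), |wronskian u u' v v' t / wronskian u₁ u₁' u₂ u₂' t - c| ≤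
      C * C₀ / m / (d - σ) * exp (-(d - σ) * t) := by
  refine exists_abs_sub_le_of_abs_deriv_le_exp (sub_pos.2 hσ) (fun t ht =>
    hasDerivWithinAt_wronskian_div_wronskian (hu t ht) (hu' t ht) (hv t ht) (hv' t ht)
      (hu₁ t ht) (hu₁' t ht) (hu₂ t ht) (hu₂' t ht) (abs_pos.1 (hm.trans_le (hW t ht))))
    fun t ht => ?_
  have hC : 0 ≤ C * exp (σ * t) := (abs_nonneg _).trans (hvb t ht)
  calc |-(v t * f t) / wronskian u₁ u₁' u₂ u₂' t|
      = |v t| * |f t| / |wronskian u₁ u₁' u₂ u₂' t| := by rw [abs_div, abs_neg, abs_mul]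
    _ ≤ C * exp (σ * t) * (C₀ * exp (-d * t)) / m :=
        div_le_div₀ (mul_nonneg hC ((abs_nonneg _).trans (hfb t ht)))
          (mul_le_mul (hvb t ht) (hfb t ht) (abs_nonneg _) hC) hm (hW t ht)
    _ = C * C₀ / m * exp (-(d - σ) * t) := by
        rw [show -(d - σ) * t = σ * t + -d * t by ring, exp_add]; ring

end SecondOrderLinear

theorem ode_inhomogeneous_estimate_general (P Q f u u' u₁ u₁' u₂ u₂' : ℝ → ℝ) (d C₀ C : ℝ)
    (hd : 1 < d) (hC₀ : 0 < C₀) (hC : 0 < C)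
    (hfb : ∀ t ∈ Ici (0:ℝ), |f t| ≤ C₀ * exp (-d * t))
    (hu₁ : ∀ t ∈ Ici (0:ℝ), HasDerivWithinAt u₁ (u₁' t) (Ici 0) t)
    (hu₁' : ∀ t ∈ Ici (0:ℝ), HasDerivWithinAt u₁' (P t * u₁' t + (1 + Q t) * u₁ t) (Ici 0) t)
    (hu₂ : ∀ t ∈ Ici (0:ℝ), HasDerivWithinAt u₂ (u₂' t) (Ici 0) t)
    (hu₂' : ∀ t ∈ Ici (0:ℝ), HasDerivWithinAt u₂' (P t * u₂' t + (1 + Q t) * u₂ t) (Ici 0) t)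
    (hb₁ : ∀ t ∈ Ici (0:ℝ), C⁻¹ * exp t ≤ u₁ t ∧ u₁ t ≤ C * exp t)
    (hb₂ : ∀ t ∈ Ici (0:ℝ), C⁻¹ * exp (-t) ≤ u₂ t ∧ u₂ t ≤ C * exp (-t))
    (hW : ∀ t ∈ Ici (0:ℝ), u₁ t * u₂' t - u₂ t * u₁' t ≤ -2 * C⁻¹ ^ 2)
    (hu : ∀ t ∈ Ici (0:ℝ), HasDerivWithinAt u (u' t) (Ici 0) t)
    (hu' : ∀ t ∈ Ici (0:ℝ),
      HasDerivWithinAt u' (P t * u' t + (1 + Q t) * u t + f t) (Ici 0) t) :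
    ∃ (c₁ c₂ C' : ℝ), 0 < C' ∧
      ∀ t ∈ Ici (0:ℝ), |u t - (c₁ * u₁ t + c₂ * u₂ t)| ≤ C' * exp (-d * t) := by
  set W := wronskian u₁ u₁' u₂ u₂'
  have hm : 0 < 2 * C⁻¹ ^ 2 := by positivity
  have hWm : ∀ t ∈ Ici (0:ℝ), 2 * C⁻¹ ^ 2 ≤ |W t| := fun t ht =>
    le_abs.2 (Or.inr (by linarith [show W t ≤ -2 * C⁻¹ ^ 2 from hW t ht]))
  have hb₁' := fun t ht => abs_le_of_inv_mul_le_of_le_mul hC (exp_pos t) (hb₁ t ht)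
  have hb₂' := fun t ht => abs_le_of_inv_mul_le_of_le_mul hC (exp_pos (-t)) (hb₂ t ht)
  obtain ⟨c₁, hc₁⟩ := exists_abs_wronskian_div_sub_le hm (by linarith : -1 < d)
    hu hu' hu₂ hu₂' hu₁ hu₁' hu₂ hu₂' hfb (by simpa using hb₂') hWm
  obtain ⟨c₂, hc₂⟩ := exists_abs_wronskian_div_sub_le hm hd
    hu hu' hu₁ hu₁' hu₁ hu₁' hu₂ hu₂' hfb (by simpa using hb₁') hWm
  set K := C * C₀ / (2 * C⁻¹ ^ 2)
  have hd₁ : 0 < d - 1 := sub_pos.2 hd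
  have hd₂ : 0 < d - -1 := by linarith
  refine ⟨c₁, -c₂, C * (K / (d - -1)) + C * (K / (d - 1)), by positivity, fun t ht => ?_⟩
  rw [eq_wronskian_div_mul_sub u u' u₁ u₁' u₂ u₂' (abs_pos.1 (hm.trans_le (hWm t ht)))]
  calc _ = |(wronskian u u' u₂ u₂' t / W t - c₁) * u₁ t -
        (wronskian u u' u₁ u₁' t / W t - c₂) * u₂ t| := by congr 1; ring
    _ ≤ |(wronskian u u' u₂ u₂' t / W t - c₁) * u₁ t| +
        |(wronskian u u' u₁ u₁' t / W t - c₂) * u₂ t| := abs_sub _ _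
    _ ≤ K / (d - -1) * C * exp (-(d - -1) * t + t) +
        K / (d - 1) * C * exp (-(d - 1) * t + -t) :=
      add_le_add (abs_mul_le_of_le_exp (hc₁ t ht) (hb₁' t ht))
        (abs_mul_le_of_le_exp (hc₂ t ht) (hb₂' t ht))
    _ = (C * (K / (d - -1)) + C * (K / (d - 1))) * exp (-d * t) := by ring_nf

/-- Variation of parameters estimate: any solution of the inhomogeneous equation
`u'' = P u' + (1+Q) u + f` with `|P|, |Q|, |f| ≤ C₀ e^{-dt}`, `d > 1`, differs from some
linear combination of the fundamental solutions `u₁, u₂` by `O(e^{-dt})`. -/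
theorem ode_inhomogeneous_estimate (P Q f u u' u₁ u₁' u₂ u₂' : ℝ → ℝ) (d C₀ C : ℝ)
    (hd : 1 < d) (hC₀ : 0 < C₀) (hC : 0 < C)
    (hP : ContinuousOn P (Ici 0)) (hQ : ContinuousOn Q (Ici 0))
    (hf : ContinuousOn f (Ici 0))
    (hQ1 : ∀ t ∈ Ici (0:ℝ), 0 < 1 + Q t)
    (hPb : ∀ t ∈ Ici (0:ℝ), |P t| ≤ C₀ * exp (-d * t))
    (hQb : ∀ t ∈ Ici (0:ℝ), |Q t| ≤ C₀ * exp (-d * t))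
    (hfb : ∀ t ∈ Ici (0:ℝ), |f t| ≤ C₀ * exp (-d * t))
    (hu₁ : ∀ t ∈ Ici (0:ℝ), HasDerivWithinAt u₁ (u₁' t) (Ici 0) t)
    (hu₁' : ∀ t ∈ Ici (0:ℝ), HasDerivWithinAt u₁' (P t * u₁' t + (1 + Q t) * u₁ t) (Ici 0) t)
    (hu₂ : ∀ t ∈ Ici (0:ℝ), HasDerivWithinAt u₂ (u₂' t) (Ici 0) t)
    (hu₂' : ∀ t ∈ Ici (0:ℝ), HasDerivWithinAt u₂' (P t * u₂' t + (1 + Q t) * u₂ t) (Ici 0) t)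
    (hb₁ : ∀ t ∈ Ici (0:ℝ), C⁻¹ * exp t ≤ u₁ t ∧ u₁ t ≤ C * exp t)
    (hb₂ : ∀ t ∈ Ici (0:ℝ), C⁻¹ * exp (-t) ≤ u₂ t ∧ u₂ t ≤ C * exp (-t))
    (hW : ∀ t ∈ Ici (0:ℝ), u₁ t * u₂' t - u₂ t * u₁' t ≤ -2 * C⁻¹ ^ 2)
    (hu : ∀ t ∈ Ici (0:ℝ), HasDerivWithinAt u (u' t) (Ici 0) t)
    (hu' : ∀ t ∈ Ici (0:ℝ),
      HasDerivWithinAt u' (P t * u' t + (1 + Q t) * u t + f t) (Ici 0) t) :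
    ∃ (c₁ c₂ C' : ℝ), 0 < C' ∧
      ∀ t ∈ Ici (0:ℝ), |u t - (c₁ * u₁ t + c₂ * u₂ t)| ≤ C' * exp (-d * t) :=
  ode_inhomogeneous_estimate_general P Q f u u' u₁ u₁' u₂ u₂' d C₀ C hd hC₀ hC hfb hu₁ hu₁' hu₂ hu₂'
    hb₁ hb₂ hW hu hu'
end
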